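/- arXiv:1712.10208 — 10 statements merged into one kernel-verified Lean document; each statement's English description precedes it below -/
import Mathlib

section
/- Let d ≥ 1 be an integer and let p, q be real numbers with p > 1 and 0 ≤ q < p − 1. Then there is no continuously differentiable function u : (0,∞) → ℝ such that u(r) > 0 and u'(r) ≤ 0 for all r > 0, lim_{r→0⁺} u(r) = 1, lim_{r→∞} u(r) = 0, lim_{r→∞} u'(r) = 0, and the function r ↦ r^{d−1}|u'(r)|^{p−2}u'(r) is differentiable on (0,∞) with derivative equal to r^{d−1} u(r)^q at every r > 0. (Equivalently, every nonincreasing solution of the radial p-Laplace equation Δ_p u = u^q with u(0⁺)=1 and u, u' → 0 at infinity must vanish at some finite radius.) -/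
/-!
The flux `r ^ (d - 1) |u'| ^ (p - 2) u'` is strictly increasing, so `u' < 0`. The energy
`(p - 1) / p |u'| ^ p - u ^ (q + 1) / (q + 1)` then decreases along the solution (the radial
term only dissipates) and tends to `0` at infinity, hence it is nonnegative. This gives the
sublinear decay `-u' ≥ c u ^ ((q + 1) / p)` with `(q + 1) / p < 1`, under which
`u ^ (1 - (q + 1) / p)` decreases at a uniform positive rate and so cannot stay positive.
-/

open Filter Set Topology

lemma strictMonoOn_Ioi_of_hasDerivAt_pos {f f' : ℝ → ℝ} {a : ℝ}
    (hf : ∀ x ∈ Ioi a, HasDerivAt f (f' x) x) (hf' : ∀ x ∈ Ioi a, 0 < f' x) :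
    StrictMonoOn f (Ioi a) :=
  strictMonoOn_of_hasDerivWithinAt_pos (convex_Ioi a)
    (fun x hx => (hf x hx).continuousAt.continuousWithinAt)
    (fun x hx => (hf x (interior_subset hx)).hasDerivWithinAt)
    (fun x hx => hf' x (interior_subset hx))

lemma antitoneOn_Ioi_of_hasDerivAt_nonpos {f f' : ℝ → ℝ} {a : ℝ}
    (hf : ∀ x ∈ Ioi a, HasDerivAt f (f' x) x) (hf' : ∀ x ∈ Ioi a, f' x ≤ 0) :
    AntitoneOn f (Ioi a) :=
  antitoneOn_of_hasDerivWithinAt_nonpos (convex_Ioi a)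
    (fun x hx => (hf x hx).continuousAt.continuousWithinAt)
    (fun x hx => (hf x (interior_subset hx)).hasDerivWithinAt)
    (fun x hx => hf' x (interior_subset hx))

lemma AntitoneOn.nonneg_of_tendsto_atTop {f : ℝ → ℝ} {a : ℝ} (hf : AntitoneOn f (Ioi a))
    (hlim : Tendsto f atTop (𝓝 0)) {x : ℝ} (hx : x ∈ Ioi a) : 0 ≤ f x :=
  le_of_tendsto hlim <| (eventually_ge_atTop x).mono fun _ hy =>
    hf hx (lt_of_lt_of_le hx hy) hy

lemma exists_nonpos_of_hasDerivAt_le_neg {f f' : ℝ → ℝ} {K : ℝ} (hK : 0 < K)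
    (hf : ∀ x ∈ Ioi 0, HasDerivAt f (f' x) x) (hf' : ∀ x ∈ Ioi 0, f' x ≤ -K) :
    ∃ x ∈ Ioi (0 : ℝ), f x ≤ 0 := by
  have hanti : AntitoneOn (fun x => f x + K * x) (Ioi 0) :=
    antitoneOn_Ioi_of_hasDerivAt_nonpos
      (fun x hx => (hf x hx).add ((hasDerivAt_id x).const_mul K))
      (fun x hx => by linarith [hf' x hx])
  set x := max 1 (f 1 / K + 1)
  have hx1 : 1 ≤ x := le_max_left _ _
  have hfx : f x + K * x ≤ f 1 + K * 1 := hanti (by norm_num) (by simp only [mem_Ioi]; linarith) hx1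
  have hKx : f 1 + K ≤ K * x := by
    calc f 1 + K = K * (f 1 / K + 1) := by field_simp
      _ ≤ K * x := mul_le_mul_of_nonneg_left (le_max_right _ _) hK.le
  exact ⟨x, by simp only [mem_Ioi]; linarith, by linarith⟩

/-- Finite-time extinction: `u ^ (1 - β)` decreases at the uniform rate `(1 - β) c`. -/
lemma not_forall_pos_of_mul_rpow_le_neg_deriv {u u' : ℝ → ℝ} {c β : ℝ} (hc : 0 < c) (hβ : β < 1)
    (hu : ∀ x ∈ Ioi 0, HasDerivAt u (u' x) x) (hdecay : ∀ x ∈ Ioi 0, c * u x ^ β ≤ -u' x) :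
    ¬ ∀ x ∈ Ioi (0 : ℝ), 0 < u x := by
  intro hpos
  have hα : 0 < 1 - β := by linarith
  have hrate : ∀ x ∈ Ioi (0 : ℝ), u' x * (1 - β) * u x ^ (1 - β - 1) ≤ -((1 - β) * c) := by
    intro x hx
    have hux := hpos x hx
    have hcancel : u x ^ β * u x ^ (1 - β - 1) = 1 := by
      rw [← Real.rpow_add hux, show β + (1 - β - 1) = 0 by ring, Real.rpow_zero]
    calc u' x * (1 - β) * u x ^ (1 - β - 1)
        ≤ -(c * u x ^ β) * ((1 - β) * u x ^ (1 - β - 1)) := by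
          rw [mul_assoc]
          exact mul_le_mul_of_nonneg_right (by linarith [hdecay x hx]) (by positivity)
      _ = -((1 - β) * c) * (u x ^ β * u x ^ (1 - β - 1)) := by ring
      _ = -((1 - β) * c) := by rw [hcancel, mul_one]
  obtain ⟨x, hx, hux⟩ := exists_nonpos_of_hasDerivAt_le_neg (mul_pos hα hc)
    (fun x hx => (hu x hx).rpow_const (p := 1 - β) (Or.inl (hpos x hx).ne')) hrate
  exact (Real.rpow_pos_of_pos (hpos x hx) _).not_ge hux

lemma abs_rpow_sub_two_mul_self_of_neg {x : ℝ} (hx : x < 0) (p : ℝ) :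
    |x| ^ (p - 2) * x = -(-x) ^ (p - 1) := by
  rw [abs_of_neg hx, show p - 1 = p - 2 + 1 by ring, Real.rpow_add_one (by linarith)]
  ring

lemma HasDerivAt.of_pow_mul {g : ℝ → ℝ} {k : ℕ} {r D : ℝ} (hr : r ≠ 0)
    (h : HasDerivAt (fun s => s ^ k * g s) (r ^ k * D) r) :
    HasDerivAt g (D - k / r * g r) r := by
  have hquot := h.div (hasDerivAt_pow k r) (pow_ne_zero k hr)
  have hg : (fun s => s ^ k * g s / s ^ k) =ᶠ[𝓝 r] g := by
    filter_upwards [isOpen_ne.mem_nhds hr] with s hs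
    field_simp [pow_ne_zero k hs]
  refine (hquot.congr_of_eventuallyEq hg.symm).congr_deriv ?_
  rcases k with _ | k
  · simp
  · field_simp
    rw [pow_succ]
    push_cast
    ring

section RadialPLaplace

variable {u u' : ℝ → ℝ} {k : ℕ} {p q : ℝ}

-- The flux `r ^ k * |u'| ^ (p - 2) * u'` is strictly increasing and nonpositive.
lemma deriv_neg_of_hasDerivAt_flux (hupos : ∀ r ∈ Ioi (0 : ℝ), 0 < u r)
    (hu' : ∀ r ∈ Ioi (0 : ℝ), u' r ≤ 0)
    (hflux : ∀ r ∈ Ioi (0 : ℝ),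
      HasDerivAt (fun s => s ^ k * |u' s| ^ (p - 2) * u' s) (r ^ k * u r ^ q) r)
    {r : ℝ} (hr : r ∈ Ioi 0) : u' r < 0 := by
  have hmono := strictMonoOn_Ioi_of_hasDerivAt_pos hflux fun x hx =>
    mul_pos (pow_pos hx k) (Real.rpow_pos_of_pos (hupos x hx) q)
  refine (hu' r hr).lt_of_ne fun hzero => ?_
  have hr1 : r + 1 ∈ Ioi (0 : ℝ) := by simp only [mem_Ioi] at hr ⊢; linarith
  have hlt := hmono hr hr1 (lt_add_one r)
  simp only [hzero, mul_zero] at hlt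
  exact hlt.not_ge (mul_nonpos_of_nonneg_of_nonpos
    (mul_nonneg (pow_nonneg (le_of_lt hr1) k) (Real.rpow_nonneg (abs_nonneg _) _)) (hu' _ hr1))

noncomputable def radialEnergy (p q : ℝ) (u u' : ℝ → ℝ) (r : ℝ) : ℝ :=
  (p - 1) / p * (-u' r) ^ p - u r ^ (q + 1) / (q + 1)

lemma hasDerivAt_radialEnergy (hp : 1 < p) (hq : q + 1 ≠ 0)
    (hu : ∀ r ∈ Ioi (0 : ℝ), HasDerivAt u (u' r) r) (hupos : ∀ r ∈ Ioi (0 : ℝ), 0 < u r)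
    (hneg : ∀ r ∈ Ioi (0 : ℝ), u' r < 0)
    (hflux : ∀ r ∈ Ioi (0 : ℝ),
      HasDerivAt (fun s => s ^ k * |u' s| ^ (p - 2) * u' s) (r ^ k * u r ^ q) r)
    {r : ℝ} (hr : r ∈ Ioi 0) :
    HasDerivAt (radialEnergy p q u u') (-(k / r) * (-u' r) ^ p) r := by
  -- `u'` need not be differentiable, so differentiate the energy through the flux
  -- `g = |u'| ^ (p - 2) * u'`, using `(-u') ^ p = (-g) ^ (p / (p - 1))`.
  set g : ℝ → ℝ := fun s => |u' s| ^ (p - 2) * u' s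
  have hg : ∀ s ∈ Ioi (0 : ℝ), -g s = (-u' s) ^ (p - 1) := fun s hs => by
    simp only [g, abs_rpow_sub_two_mul_self_of_neg (hneg s hs), neg_neg]
  have hx : 0 < -u' r := neg_pos.mpr (hneg r hr)
  have hp1 : p - 1 ≠ 0 := by linarith
  have hg' : HasDerivAt g (u r ^ q - k / r * g r) r :=
    HasDerivAt.of_pow_mul (ne_of_gt hr) (by simpa only [mul_assoc] using hflux r hr)
  have hgpos : 0 < -g r := by rw [hg r hr]; exact Real.rpow_pos_of_pos hx _
  have hE : (fun s => (p - 1) / p * (-g s) ^ (p / (p - 1)) - u s ^ (q + 1) / (q + 1))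
      =ᶠ[𝓝 r] radialEnergy p q u u' := by
    filter_upwards [isOpen_Ioi.mem_nhds hr] with s hs
    have hxs : 0 ≤ -u' s := neg_nonneg.mpr (hneg s hs).le
    rw [radialEnergy, hg s hs, ← Real.rpow_mul hxs, mul_div_cancel₀ _ hp1]
  refine (((hg'.neg.rpow_const (p := p / (p - 1)) (Or.inl hgpos.ne')).const_mul
    ((p - 1) / p)).sub ((hu r hr).rpow_const (p := q + 1) (Or.inl (hupos r hr).ne')
    |>.div_const (q + 1))).congr_of_eventuallyEq hE.symm |>.congr_deriv ?_
  have hpow : (-g r) ^ (p / (p - 1) - 1) = -u' r := by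
    rw [hg r hr, ← Real.rpow_mul hx.le, show (p - 1) * (p / (p - 1) - 1) = 1 by field_simp; ring,
      Real.rpow_one]
  have hpow' : (-u' r) ^ p = (-u' r) ^ (p - 1) * (-u' r) := by
    rw [← Real.rpow_add_one hx.ne', sub_add_cancel]
  rw [add_sub_cancel_right, Pi.neg_apply, hpow, hpow', ← hg r hr]
  field_simp
  ring

lemma antitoneOn_radialEnergy (hp : 1 < p) (hq : q + 1 ≠ 0)
    (hu : ∀ r ∈ Ioi (0 : ℝ), HasDerivAt u (u' r) r) (hupos : ∀ r ∈ Ioi (0 : ℝ), 0 < u r)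
    (hu' : ∀ r ∈ Ioi (0 : ℝ), u' r ≤ 0)
    (hflux : ∀ r ∈ Ioi (0 : ℝ),
      HasDerivAt (fun s => s ^ k * |u' s| ^ (p - 2) * u' s) (r ^ k * u r ^ q) r) :
    AntitoneOn (radialEnergy p q u u') (Ioi 0) := by
  have hneg := fun r (hr : r ∈ Ioi (0 : ℝ)) => deriv_neg_of_hasDerivAt_flux hupos hu' hflux hr
  refine antitoneOn_Ioi_of_hasDerivAt_nonpos
    (fun r hr => hasDerivAt_radialEnergy hp hq hu hupos hneg hflux hr) fun r hr => ?_
  have hdamp : 0 ≤ (k : ℝ) / r * (-u' r) ^ p :=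
    mul_nonneg (div_nonneg k.cast_nonneg (le_of_lt hr))
      (Real.rpow_nonneg (neg_nonneg.mpr (hu' r hr)) _)
  linarith

lemma tendsto_radialEnergy_atTop (hp : 0 < p) (hq : 0 < q + 1) (hu : Tendsto u atTop (𝓝 0))
    (hu' : Tendsto u' atTop (𝓝 0)) : Tendsto (radialEnergy p q u u') atTop (𝓝 0) := by
  have hgrad : Tendsto (fun r => (-u' r) ^ p) atTop (𝓝 0) := by
    simpa [Real.zero_rpow hp.ne'] using hu'.neg.rpow_const (Or.inr hp.le)
  have hpot : Tendsto (fun r => u r ^ (q + 1)) atTop (𝓝 0) := by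
    simpa [Real.zero_rpow hq.ne'] using hu.rpow_const (Or.inr hq.le)
  unfold radialEnergy
  simpa using (hgrad.const_mul ((p - 1) / p)).sub (hpot.div_const (q + 1))

lemma mul_rpow_le_of_radialEnergy_nonneg (hp : 1 < p) (hq : 0 < q + 1) {x y : ℝ} (hx : 0 ≤ x)
    (hy : 0 ≤ y) (hE : 0 ≤ (p - 1) / p * x ^ p - y ^ (q + 1) / (q + 1)) :
    (p / ((p - 1) * (q + 1))) ^ (1 / p) * y ^ ((q + 1) / p) ≤ x := by
  have hp0 : 0 < p := by linarith
  have hp1 : 0 < p - 1 := by linarith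
  have hpow : p / ((p - 1) * (q + 1)) * y ^ (q + 1) ≤ x ^ p := by
    rw [div_mul_eq_mul_div, div_le_iff₀ (by positivity)]
    rw [sub_nonneg, div_le_iff₀ hq] at hE
    field_simp at hE
    linarith
  calc (p / ((p - 1) * (q + 1))) ^ (1 / p) * y ^ ((q + 1) / p)
      = (p / ((p - 1) * (q + 1)) * y ^ (q + 1)) ^ (1 / p) := by
        rw [Real.mul_rpow (by positivity) (by positivity), ← Real.rpow_mul hy, mul_one_div]
    _ ≤ (x ^ p) ^ (1 / p) := Real.rpow_le_rpow (by positivity) hpow (by positivity)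
    _ = x := by rw [← Real.rpow_mul hx, mul_one_div_cancel hp0.ne', Real.rpow_one]

end RadialPLaplace

theorem stmt0_general (d : ℕ) (p q : ℝ) (hp : 1 < p) (hq0 : 0 ≤ q) (hq : q < p - 1) :
    ¬ ∃ u u' : ℝ → ℝ,
      (∀ r ∈ Ioi (0:ℝ), HasDerivAt u (u' r) r) ∧
      ContinuousOn u' (Ioi 0) ∧
      (∀ r ∈ Ioi (0:ℝ), 0 < u r) ∧
      (∀ r ∈ Ioi (0:ℝ), u' r ≤ 0) ∧
      Tendsto u (𝓝[>] 0) (𝓝 1) ∧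
      Tendsto u atTop (𝓝 0) ∧
      Tendsto u' atTop (𝓝 0) ∧
      (∀ r ∈ Ioi (0:ℝ),
        HasDerivAt (fun s => s ^ (d - 1) * |u' s| ^ (p - 2) * u' s)
          (r ^ (d - 1) * u r ^ q) r) := by
  rintro ⟨u, u', hu, -, hupos, hu'nonpos, -, hu0, hu'0, hflux⟩
  have hq1 : 0 < q + 1 := by linarith
  have hEnonneg := fun r (hr : r ∈ Ioi (0 : ℝ)) =>
    (antitoneOn_radialEnergy hp hq1.ne' hu hupos hu'nonpos hflux).nonneg_of_tendsto_atTop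
      (tendsto_radialEnergy_atTop (by linarith) hq1 hu0 hu'0) hr
  have hdecay : ∀ r ∈ Ioi (0 : ℝ),
      (p / ((p - 1) * (q + 1))) ^ (1 / p) * u r ^ ((q + 1) / p) ≤ -u' r := fun r hr =>
    mul_rpow_le_of_radialEnergy_nonneg hp hq1 (neg_nonneg.mpr (hu'nonpos r hr)) (hupos r hr).le
      (hEnonneg r hr)
  exact not_forall_pos_of_mul_rpow_le_neg_deriv (by positivity)
    ((div_lt_one (by linarith)).mpr (by linarith)) hu hdecay hupos

/-- For `d ≥ 1`, `p > 1`, `0 ≤ q < p - 1`, there is no `C¹` positive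
nonincreasing solution on `(0,∞)` of the radial p-Laplace equation `Δ_p u = u^q`
with `u(0⁺) = 1`, `u(∞) = 0`, `u'(∞) = 0`. -/
theorem stmt0 (d : ℕ) (hd : 1 ≤ d) (p q : ℝ) (hp : 1 < p) (hq0 : 0 ≤ q) (hq : q < p - 1) :
    ¬ ∃ u u' : ℝ → ℝ,
      (∀ r ∈ Ioi (0:ℝ), HasDerivAt u (u' r) r) ∧
      ContinuousOn u' (Ioi 0) ∧
      (∀ r ∈ Ioi (0:ℝ), 0 < u r) ∧
      (∀ r ∈ Ioi (0:ℝ), u' r ≤ 0) ∧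
      Tendsto u (𝓝[>] 0) (𝓝 1) ∧
      Tendsto u atTop (𝓝 0) ∧
      Tendsto u' atTop (𝓝 0) ∧
      (∀ r ∈ Ioi (0:ℝ),
        HasDerivAt (fun s => s ^ (d - 1) * |u' s| ^ (p - 2) * u' s)
          (r ^ (d - 1) * u r ^ q) r) :=
  stmt0_general d p q hp hq0 hq
end

section
/- Let d ≥ 1 be an integer, p > 1, q ≥ 0 real, and 0 < R < ∞. Suppose u : (0,R) → ℝ is continuously differentiable with u(r) > 0 and u'(r) ≤ 0 on (0,R), lim_{r→0⁺} u(r) = 1, lim_{r→R⁻} u(r) = 0, the function r ↦ r^{d−1}|u'(r)|^{p−2}u'(r) is differentiable on (0,R) with derivative r^{d−1} u(r)^q at every r ∈ (0,R), and ∫_0^R r^{d−1}(|u'(r)|^p + u(r)^{q+1}) dr < ∞. Then lim_{r→0⁺} r^d |u'(r)|^p = 0, the limit L := lim_{r→R⁻} r^d |u'(r)|^p exists, and ((p−d)/p) ∫_0^R r^{d−1}|u'(r)|^p dr − (d/(q+1)) ∫_0^R r^{d−1} u(r)^{q+1} dr = ((p−1)/p) · L. -/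
/-!
With `F(u) = u^(q+1)/(q+1)` the primitive of the nonlinearity, the Pohozaev function
`P(r) = (p-1)/p · r^d |u'|^p - r^d F(u)` has as derivative the integrand
`(p-d)/p · r^(d-1) |u'|^p - d r^(d-1) F(u)` of the energy. This derivative is integrable, so `P`
has one-sided limits at `0` and `R` and the energy equals `P(R⁻) - P(0⁺)`. Since `r^d F(u) → 0` at
both ends, `r^d |u'|^p` has limits there as well; at `0` its limit `M` must vanish, for otherwise
`r^(d-1) |u'|^p ≈ M / r` would not be integrable near `0`.
-/

open Filter Set Topology MeasureTheory

section
variable {E : Type*} [NormedAddCommGroup E] [NormedSpace ℝ E] [CompleteSpace E]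
  {f f' : ℝ → E} {a b : ℝ}

lemma tendsto_nhdsWithin_Ioo_of_hasDerivAt_of_integrableOn
    (hf : ∀ x ∈ Ioo a b, HasDerivAt f (f' x) x) (hf' : IntegrableOn f' (Ioo a b))
    {c e : ℝ} (hc : c ∈ Ioo a b) (he : e ∈ Icc a b) :
    Tendsto f (𝓝[Ioo a b] e) (𝓝 (f c + ∫ x in c..e, f' x)) := by
  have hab : uIcc a b = Icc a b := uIcc_of_le (hc.1.trans hc.2).le
  have hint : IntervalIntegrable f' volume a b :=
    (intervalIntegrable_iff_integrableOn_Ioo_of_le (hc.1.trans hc.2).le).2 hf'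
  have hprim := intervalIntegral.continuousOn_primitive_interval' hint
    (hab ▸ Ioo_subset_Icc_self hc)
  rw [hab] at hprim
  refine ((hprim e he).tendsto.mono_left (nhdsWithin_mono _ Ioo_subset_Icc_self)).const_add (f c)
    |>.congr' ?_
  filter_upwards [self_mem_nhdsWithin] with x hx
  have hsub : uIcc c x ⊆ Ioo a b := ordConnected_Ioo.uIcc_subset hc hx
  rw [intervalIntegral.integral_eq_sub_of_hasDerivAt (fun y hy => hf y (hsub hy))
    (hint.mono_set (hab ▸ hsub.trans Ioo_subset_Icc_self))]
  abel

lemma exists_tendsto_of_hasDerivAt_of_integrableOn (hab : a < b)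
    (hf : ∀ x ∈ Ioo a b, HasDerivAt f (f' x) x) (hf' : IntegrableOn f' (Ioo a b)) :
    ∃ fa fb, Tendsto f (𝓝[>] a) (𝓝 fa) ∧ Tendsto f (𝓝[<] b) (𝓝 fb) ∧
      ∫ x in Ioo a b, f' x = fb - fa := by
  obtain ⟨c, hc⟩ := nonempty_Ioo.2 hab
  have ha := tendsto_nhdsWithin_Ioo_of_hasDerivAt_of_integrableOn hf hf' hc
    (left_mem_Icc.2 hab.le)
  have hb := tendsto_nhdsWithin_Ioo_of_hasDerivAt_of_integrableOn hf hf' hc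
    (right_mem_Icc.2 hab.le)
  rw [nhdsWithin_Ioo_eq_nhdsGT hab] at ha
  rw [nhdsWithin_Ioo_eq_nhdsLT hab] at hb
  refine ⟨_, _, ha, hb, ?_⟩
  rw [← integral_Ioc_eq_integral_Ioo, ← intervalIntegral.integral_of_le hab.le]
  exact intervalIntegral.integral_eq_sub_of_hasDerivAt_of_tendsto hab hf
    ((intervalIntegrable_iff_integrableOn_Ioo_of_le hab.le).2 hf') ha hb

end

lemma eq_zero_of_tendsto_mul_of_integrableOn {φ : ℝ → ℝ} {ε M : ℝ} (hε : 0 < ε)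
    (hφ : IntegrableOn φ (Ioo 0 ε)) (hlim : Tendsto (fun x => x * φ x) (𝓝[>] 0) (𝓝 M)) :
    M = 0 := by
  by_contra hM
  have hinv : (fun x => x⁻¹) =O[𝓝[>] 0] φ := by
    refine Asymptotics.IsBigO.of_bound (2 / |M|) ?_
    filter_upwards [self_mem_nhdsWithin,
      hlim.abs.eventually (lt_mem_nhds (half_lt_self (abs_pos.2 hM)))] with x (hx : 0 < x) hxφ
    rw [abs_mul, abs_of_pos hx] at hxφ
    rw [Real.norm_eq_abs, Real.norm_eq_abs, abs_inv, abs_of_pos hx, inv_le_iff_one_le_mul₀ hx]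
    field_simp
    linarith
  refine not_integrableOn_of_tendsto_norm_atTop_of_deriv_isBigO_filter (f := Real.log) (𝓝[>] 0)
    (Ioo_mem_nhdsGT hε) ?_ (tendsto_abs_atBot_atTop.comp Real.tendsto_log_nhdsGT_zero) ?_ hφ
  · filter_upwards [self_mem_nhdsWithin] with x (hx : 0 < x)
    exact Real.differentiableAt_log hx.ne'
  · rwa [Real.deriv_log']

lemma integrableOn_mul_add_iff_of_nonneg {α : Type*} [MeasurableSpace α] {μ : Measure α}
    {w a b : α → ℝ} {s : Set α} (hs : MeasurableSet s)
    (hwa : AEStronglyMeasurable (fun r => w r * a r) (μ.restrict s))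
    (hw : ∀ r ∈ s, 0 ≤ w r) (ha : ∀ r ∈ s, 0 ≤ a r) (hb : ∀ r ∈ s, 0 ≤ b r) :
    IntegrableOn (fun r => w r * (a r + b r)) s μ ↔
      IntegrableOn (fun r => w r * a r) s μ ∧ IntegrableOn (fun r => w r * b r) s μ := by
  simp only [mul_add]
  refine integrable_add_iff_of_nonneg hwa ?_ ?_ <;> filter_upwards [ae_restrict_mem hs] with r hr
  exacts [mul_nonneg (hw r hr) (ha r hr), mul_nonneg (hw r hr) (hb r hr)]

lemma hasDerivAt_rpow_add_one_div {q : ℝ} (hq : 0 ≤ q) (x : ℝ) :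
    HasDerivAt (fun x => x ^ (q + 1) / (q + 1)) (x ^ q) x := by
  refine ((Real.hasDerivAt_rpow_const (Or.inr (by linarith))).div_const (q + 1)).congr_deriv ?_
  rw [add_sub_cancel_right]
  field_simp

noncomputable def pFlux (p x : ℝ) : ℝ := |x| ^ (p - 2) * x

@[simp] lemma pFlux_zero (p : ℝ) : pFlux p 0 = 0 := by simp [pFlux]

lemma pFlux_mul_self {p : ℝ} (hp : p ≠ 0) (x : ℝ) : pFlux p x * x = |x| ^ p := by
  rcases eq_or_ne x 0 with rfl | hx
  · simp [Real.zero_rpow hp]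
  · rw [pFlux, mul_assoc, ← sq, ← sq_abs, ← Real.rpow_natCast,
      ← Real.rpow_add (abs_pos.2 hx)]
    norm_num

lemma abs_pFlux {p : ℝ} (hp : p ≠ 1) (x : ℝ) : |pFlux p x| = |x| ^ (p - 1) := by
  rcases eq_or_ne x 0 with rfl | hx
  · simp [Real.zero_rpow (sub_ne_zero.2 hp)]
  · rw [pFlux, abs_mul, abs_of_nonneg (Real.rpow_nonneg (abs_nonneg x) _),
      ← Real.rpow_add_one (abs_pos.2 hx).ne']
    ring_nf

lemma abs_pFlux_rpow_conj {p : ℝ} (hp : 1 < p) (x : ℝ) :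
    |pFlux p x| ^ (p / (p - 1)) = |x| ^ p := by
  rw [abs_pFlux hp.ne', ← Real.rpow_mul (abs_nonneg x), mul_div_cancel₀ _ (sub_pos.2 hp).ne']

lemma pFlux_conj_pFlux {p : ℝ} (hp : 1 < p) (x : ℝ) :
    pFlux (p / (p - 1)) (pFlux p x) = x := by
  rcases eq_or_ne x 0 with rfl | hx
  · simp
  · have hp1 : p - 1 ≠ 0 := (sub_pos.2 hp).ne'
    have hexp : (p - 1) * (p / (p - 1) - 2) + (p - 2) = 0 := by
      field_simp
      ring
    rw [pFlux, abs_pFlux hp.ne', pFlux, ← mul_assoc, ← Real.rpow_mul (abs_nonneg x),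
      ← Real.rpow_add (abs_pos.2 hx), hexp, Real.rpow_zero, one_mul]

lemma hasDerivAt_abs_rpow_of_hasDerivAt_pFlux {v : ℝ → ℝ} {p w r : ℝ} (hp : 1 < p)
    (h : HasDerivAt (fun s => pFlux p (v s)) w r) :
    HasDerivAt (fun s => |v s| ^ p) (p / (p - 1) * v r * w) r := by
  have hp' : 1 < p / (p - 1) := (one_lt_div (sub_pos.2 hp)).2 (by linarith)
  have hcomp := (hasDerivAt_abs_rpow (pFlux p (v r)) hp').comp r h
  simp only [Function.comp_def, abs_pFlux_rpow_conj hp] at hcomp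
  rwa [mul_assoc _ _ (pFlux p (v r)), ← pFlux, pFlux_conj_pFlux hp] at hcomp

noncomputable def pohozaev (d : ℕ) (p : ℝ) (F u u' : ℝ → ℝ) (r : ℝ) : ℝ :=
  (p - 1) / p * (r ^ d * |u' r| ^ p) - r ^ d * F (u r)

/-- `u'` need not be differentiable, but `pFlux p u'` is (it is the flux divided by `r^(d-1)`),
and `|u'|^p` is a differentiable function of it. -/
lemma hasDerivAt_pohozaev {d : ℕ} {p r : ℝ} {F f u u' : ℝ → ℝ} (hd : 1 ≤ d) (hp : 1 < p)
    (hr : r ≠ 0) (hu : HasDerivAt u (u' r) r) (hF : HasDerivAt F (f (u r)) (u r))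
    (hflux : HasDerivAt (fun s => s ^ (d - 1) * pFlux p (u' s)) (r ^ (d - 1) * f (u r)) r) :
    HasDerivAt (pohozaev d p F u u')
      ((p - d) / p * (r ^ (d - 1) * |u' r| ^ p) - d * (r ^ (d - 1) * F (u r))) r := by
  obtain ⟨m, rfl⟩ : ∃ m, d = m + 1 := ⟨d - 1, by omega⟩
  simp only [Nat.add_sub_cancel] at hflux ⊢
  have hj : DifferentiableAt ℝ (fun s => pFlux p (u' s)) r := by
    refine (hflux.differentiableAt.div (differentiableAt_pow m) (pow_ne_zero m hr))
      |>.congr_of_eventuallyEq ?_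
    filter_upwards [isOpen_ne.mem_nhds hr] with s hs
    simp only [Pi.div_apply]
    field_simp [pow_ne_zero m hs]
  have hkey : r * f (u r) = m * pFlux p (u' r) + r * deriv (fun s => pFlux p (u' s)) r := by
    have hflux' := hflux.unique ((hasDerivAt_pow m r).mul hj.hasDerivAt)
    have hpow : (m : ℝ) * r ^ (m - 1) * r = m * r ^ m := by
      rcases Nat.eq_zero_or_pos m with h | h
      · simp [h]
      · rw [mul_assoc, pow_sub_one_mul h.ne']
    apply mul_left_cancel₀ (pow_ne_zero m hr)
    linear_combination r * hflux' + pFlux p (u' r) * hpow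
  have hderiv := (((hasDerivAt_pow (m + 1) r).mul (hasDerivAt_abs_rpow_of_hasDerivAt_pFlux hp
    hj.hasDerivAt)).const_mul ((p - 1) / p)).sub ((hasDerivAt_pow (m + 1) r).mul (hF.comp r hu))
  refine hderiv.congr_deriv ?_
  have hp0 : p ≠ 0 := by linarith
  have hp1 : p - 1 ≠ 0 := by linarith
  rw [← pFlux_mul_self hp0, pow_succ]
  simp only [Function.comp_apply, Nat.add_sub_cancel]
  push_cast
  field_simp
  linear_combination -(p * u' r) * hkey

lemma tendsto_pow_mul_abs_rpow_of_tendsto_pohozaev {d : ℕ} {p P : ℝ} {F u u' : ℝ → ℝ}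
    {l : Filter ℝ} (hp : 1 < p) (hP : Tendsto (pohozaev d p F u u') l (𝓝 P))
    (hF : Tendsto (fun r => r ^ d * F (u r)) l (𝓝 0)) :
    Tendsto (fun r => r ^ d * |u' r| ^ p) l (𝓝 (p / (p - 1) * P)) := by
  have hp0 : p ≠ 0 := by linarith
  have hp1 : p - 1 ≠ 0 := by linarith
  have hlim := (hP.add hF).const_mul (p / (p - 1))
  rw [add_zero] at hlim
  refine hlim.congr fun r => ?_
  simp only [pohozaev]
  field_simp
  ring

theorem pohozaev_identity {d : ℕ} {p R : ℝ} {F f u u' : ℝ → ℝ} (hd : 1 ≤ d) (hp : 1 < p)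
    (hR : 0 < R) (hu : ∀ r ∈ Ioo 0 R, HasDerivAt u (u' r) r)
    (hF : ∀ r ∈ Ioo 0 R, HasDerivAt F (f (u r)) (u r))
    (hflux : ∀ r ∈ Ioo 0 R,
      HasDerivAt (fun s => s ^ (d - 1) * pFlux p (u' s)) (r ^ (d - 1) * f (u r)) r)
    (hgrad : IntegrableOn (fun r => r ^ (d - 1) * |u' r| ^ p) (Ioo 0 R))
    (hpot : IntegrableOn (fun r => r ^ (d - 1) * F (u r)) (Ioo 0 R))
    (hpot0 : Tendsto (fun r => r ^ d * F (u r)) (𝓝[>] 0) (𝓝 0))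
    (hpotR : Tendsto (fun r => r ^ d * F (u r)) (𝓝[<] R) (𝓝 0)) :
    Tendsto (fun r => r ^ d * |u' r| ^ p) (𝓝[>] 0) (𝓝 0) ∧
    ∃ L, Tendsto (fun r => r ^ d * |u' r| ^ p) (𝓝[<] R) (𝓝 L) ∧
      (p - d) / p * (∫ r in Ioo 0 R, r ^ (d - 1) * |u' r| ^ p)
        - d * (∫ r in Ioo 0 R, r ^ (d - 1) * F (u r)) = (p - 1) / p * L := by
  obtain ⟨P0, PR, hP0, hPR, hintP⟩ := exists_tendsto_of_hasDerivAt_of_integrableOn hR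
    (fun r hr => hasDerivAt_pohozaev hd hp hr.1.ne' (hu r hr) (hF r hr) (hflux r hr))
    ((hgrad.const_mul _).sub (hpot.const_mul _))
  have hlim0 := tendsto_pow_mul_abs_rpow_of_tendsto_pohozaev hp hP0 hpot0
  have hM : p / (p - 1) * P0 = 0 := eq_zero_of_tendsto_mul_of_integrableOn hR hgrad
    (hlim0.congr fun r => by rw [← mul_assoc, ← pow_succ', Nat.sub_add_cancel hd])
  have hp0 : p ≠ 0 := by linarith
  have hp1 : p - 1 ≠ 0 := by linarith
  have hP0 : P0 = 0 := (mul_eq_zero.1 hM).resolve_left (div_ne_zero hp0 hp1)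
  refine ⟨hM ▸ hlim0, _, tendsto_pow_mul_abs_rpow_of_tendsto_pohozaev hp hPR hpotR, ?_⟩
  rw [← integral_const_mul, ← integral_const_mul, ← integral_sub (hgrad.const_mul _)
    (hpot.const_mul _), hintP, hP0]
  field_simp
  ring

theorem stmt1_general (d : ℕ) (hd : 1 ≤ d) (p q R : ℝ) (hp : 1 < p) (hq : 0 ≤ q)
    (hR : 0 < R)
    (u u' : ℝ → ℝ)
    (hderiv : ∀ r ∈ Ioo (0:ℝ) R, HasDerivAt u (u' r) r)
    (hu'c : ContinuousOn u' (Ioo 0 R))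
    (hupos : ∀ r ∈ Ioo (0:ℝ) R, 0 < u r)
    (hlim0 : Tendsto u (𝓝[>] 0) (𝓝 1))
    (hlimR : Tendsto u (𝓝[<] R) (𝓝 0))
    (hode : ∀ r ∈ Ioo (0:ℝ) R,
      HasDerivAt (fun s => s ^ (d - 1) * |u' s| ^ (p - 2) * u' s)
        (r ^ (d - 1) * u r ^ q) r)
    (hint : IntegrableOn (fun r => r ^ (d - 1) * (|u' r| ^ p + u r ^ (q + 1))) (Ioo 0 R)) :
    Tendsto (fun r => r ^ d * |u' r| ^ p) (𝓝[>] 0) (𝓝 0) ∧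
    ∃ L : ℝ, Tendsto (fun r => r ^ d * |u' r| ^ p) (𝓝[<] R) (𝓝 L) ∧
      ((p - (d:ℝ)) / p) * (∫ r in Ioo (0:ℝ) R, r ^ (d - 1) * |u' r| ^ p)
        - ((d : ℝ) / (q + 1)) * (∫ r in Ioo (0:ℝ) R, r ^ (d - 1) * u r ^ (q + 1))
      = ((p - 1) / p) * L := by
  have hq1 : 0 < q + 1 := by linarith
  set F : ℝ → ℝ := fun x => x ^ (q + 1) / (q + 1) with hF
  have hFcont : Continuous F := (Real.continuous_rpow_const hq1.le).div_const _
  obtain ⟨hgrad, hpot⟩ := (integrableOn_mul_add_iff_of_nonneg measurableSet_Ioo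
    ((continuous_pow _).continuousOn.mul (hu'c.abs.rpow_const fun _ _ => Or.inr (by linarith))
      |>.aestronglyMeasurable measurableSet_Ioo) (fun r hr => pow_nonneg hr.1.le _)
    (fun _ _ => Real.rpow_nonneg (abs_nonneg _) _)
    (fun r hr => Real.rpow_nonneg (hupos r hr).le _)).1 hint
  have hpot0 : Tendsto (fun r => r ^ d * F (u r)) (𝓝[>] 0) (𝓝 0) := by
    have := (((continuous_pow d).tendsto 0).mono_left nhdsWithin_le_nhds).mul
      ((hFcont.tendsto 1).comp hlim0)
    rwa [zero_pow (by omega), zero_mul] at this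
  have hpotR : Tendsto (fun r => r ^ d * F (u r)) (𝓝[<] R) (𝓝 0) := by
    have := (((continuous_pow d).tendsto R).mono_left nhdsWithin_le_nhds).mul
      ((hFcont.tendsto 0).comp hlimR)
    simpa [hF, Real.zero_rpow hq1.ne'] using this
  obtain ⟨hlim0', L, hlimR', hid⟩ := pohozaev_identity (f := fun x => x ^ q) hd hp hR hderiv
    (fun r _ => hasDerivAt_rpow_add_one_div hq (u r))
    (fun r hr => by simpa only [pFlux, mul_assoc] using hode r hr) hgrad
    (by simpa only [IntegrableOn, hF, mul_div_assoc] using hpot.div_const (q + 1)) hpot0 hpotR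
  refine ⟨hlim0', L, hlimR', ?_⟩
  simp only [← mul_div_assoc, integral_div] at hid
  rw [← hid]
  ring

/-- Pohozaev-type identity relating the energy functional to the
contact angle at the touchdown radius `R` for a radial solution of `Δ_p u = u^q`. -/
theorem stmt1 (d : ℕ) (hd : 1 ≤ d) (p q R : ℝ) (hp : 1 < p) (hq : 0 ≤ q)
    (hR : 0 < R)
    (u u' : ℝ → ℝ)
    (hderiv : ∀ r ∈ Ioo (0:ℝ) R, HasDerivAt u (u' r) r)
    (hu'c : ContinuousOn u' (Ioo 0 R))
    (hupos : ∀ r ∈ Ioo (0:ℝ) R, 0 < u r)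
    (hu'le : ∀ r ∈ Ioo (0:ℝ) R, u' r ≤ 0)
    (hlim0 : Tendsto u (𝓝[>] 0) (𝓝 1))
    (hlimR : Tendsto u (𝓝[<] R) (𝓝 0))
    (hode : ∀ r ∈ Ioo (0:ℝ) R,
      HasDerivAt (fun s => s ^ (d - 1) * |u' s| ^ (p - 2) * u' s)
        (r ^ (d - 1) * u r ^ q) r)
    (hint : IntegrableOn (fun r => r ^ (d - 1) * (|u' r| ^ p + u r ^ (q + 1))) (Ioo 0 R)) :
    Tendsto (fun r => r ^ d * |u' r| ^ p) (𝓝[>] 0) (𝓝 0) ∧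
    ∃ L : ℝ, Tendsto (fun r => r ^ d * |u' r| ^ p) (𝓝[<] R) (𝓝 L) ∧
      ((p - (d:ℝ)) / p) * (∫ r in Ioo (0:ℝ) R, r ^ (d - 1) * |u' r| ^ p)
        - ((d : ℝ) / (q + 1)) * (∫ r in Ioo (0:ℝ) R, r ^ (d - 1) * u r ^ (q + 1))
      = ((p - 1) / p) * L :=
  stmt1_general d hd p q R hp hq hR u u' hderiv hu'c hupos hlim0 hlimR hode hint
end

section
/- Let d ≥ 1 be an integer, p > d, q > 0, and 0 < r₁ < r₂. For i = 1, 2, let u_i : [r_i, ∞) → ℝ be a continuously differentiable, nonincreasing, nonnegative function with u_i(r_i) = 1, lim_{r→∞} u_i(r) = 0, u_i'(r) < 0 at every r > r_i with u_i(r) > 0, such that the function r ↦ r^{d−1}|u_i'(r)|^{p−2}u_i'(r) is differentiable on (r_i, ∞) with derivative r^{d−1} u_i(r)^q. Then u₂(r) > u₁(r) for every r ≥ r₂ at which u₂(r) > 0. -/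
/-!
Write `g = u₁ - u₂` and `w` for the difference of the radial fluxes
`r ^ (d - 1) * |uᵢ'| ^ (p - 2) * uᵢ'`, so that `w' = r ^ (d - 1) * (u₁ ^ q - u₂ ^ q)`.
Since `g (r₂) < 0` and `g → 0` at infinity, a positive value of `g` would give a positive maximum
at some `ρ > r₂`; there `g' = 0`, so `w (ρ) = 0`, and to the right of `ρ` the flux difference
increases, hence `u₁' > u₂'` and `g` keeps growing. Thus `u₁ ≤ u₂`. At a touching point with
`u₂ > 0` both `g` and `w` vanish; on compact intervals where the `uᵢ` are positive and the `uᵢ'`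
negative, `u'` is a Lipschitz function of the flux and `u ^ q` one of `u`, so `(g, w)` obeys a
linear Grönwall inequality and `u₁ = u₂` back to `r₂`, contradicting `u₁ (r₂) < 1 = u₂ (r₂)`.
-/

open Filter Set Topology
open scoped NNReal

theorem strictMono_abs_rpow_mul_self {p : ℝ} (hp : 1 < p) :
    StrictMono fun x : ℝ => |x| ^ (p - 2) * x := by
  refine strictMono_of_odd_strictMonoOn_nonneg (fun x => by simp [abs_neg]) fun x hx y hy hxy => ?_
  have hp' : p - 2 + 1 ≠ 0 := by linarith
  simp only [abs_of_nonneg (show (0 : ℝ) ≤ x from hx), abs_of_nonneg (show (0 : ℝ) ≤ y from hy),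
    ← Real.rpow_add_one' hx hp', ← Real.rpow_add_one' hy hp']
  exact Real.rpow_lt_rpow hx hxy (by linarith)

theorem abs_rpow_mul_self_of_neg {p x : ℝ} (hx : x < 0) : |x| ^ (p - 2) * x = -|x| ^ (p - 1) := by
  rw [show p - 1 = p - 2 + 1 by ring, Real.rpow_add_one (abs_pos.2 hx.ne).ne', abs_of_neg hx]
  ring

theorem eq_zero_of_norm_deriv_le_mul_norm_of_eq_zero_left {E : Type*} [NormedAddCommGroup E]
    [NormedSpace ℝ E] {f f' : ℝ → E} {K a b : ℝ} (hf : ∀ x ∈ Icc a b, HasDerivAt f (f' x) x)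
    (hb : f b = 0) (bound : ∀ x ∈ Icc a b, ‖f' x‖ ≤ K * ‖f x‖) : ∀ x ∈ Icc a b, f x = 0 := by
  have mem_neg {x} (hx : x ∈ Icc (-b) (-a)) : -x ∈ Icc a b := ⟨le_neg.2 hx.2, neg_le.1 hx.1⟩
  have hrev (x) (hx : x ∈ Icc (-b) (-a)) : HasDerivAt (fun y => f (-y)) (-f' (-x)) x := by
    simpa [Function.comp_def] using (hf (-x) (mem_neg hx)).scomp x (hasDerivAt_neg x)
  intro x hx
  simpa using eq_zero_of_abs_deriv_le_mul_abs_self_of_eq_zero_right (K := K)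
    (fun y hy => (hrev y hy).continuousAt.continuousWithinAt)
    (fun y hy => (hrev y (Ico_subset_Icc_self hy)).hasDerivWithinAt) (by simpa using hb)
    (fun y hy => by simpa using bound _ (mem_neg (Ico_subset_Icc_self hy))) (-x)
    ⟨neg_le_neg hx.2, neg_le_neg hx.1⟩

theorem LocallyLipschitzOn.exists_dist_comp_le {X Y Z : Type*} [TopologicalSpace X]
    [PseudoMetricSpace Y] [PseudoMetricSpace Z] {g : Y → Z} {U : Set Y} {K : Set X}
    {f₁ f₂ : X → Y} (hg : LocallyLipschitzOn U g) (hK : IsCompact K)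
    (hf₁ : ContinuousOn f₁ K) (hf₂ : ContinuousOn f₂ K) (hKU₁ : MapsTo f₁ K U)
    (hKU₂ : MapsTo f₂ K U) :
    ∃ L : ℝ≥0, ∀ t ∈ K, dist (g (f₁ t)) (g (f₂ t)) ≤ L * dist (f₁ t) (f₂ t) := by
  obtain ⟨L, hL⟩ := (hg.mono (union_subset hKU₁.image_subset hKU₂.image_subset)
    ).exists_lipschitzOnWith_of_compact
      ((hK.image_of_continuousOn hf₁).union (hK.image_of_continuousOn hf₂))
  exact ⟨L, fun t ht => hL.dist_le_mul _ (Or.inl ⟨t, ht, rfl⟩) _ (Or.inr ⟨t, ht, rfl⟩)⟩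

theorem locallyLipschitzOn_rpow_const (q : ℝ) : LocallyLipschitzOn (Ioi 0) fun x : ℝ => x ^ q :=
  ContDiffOn.locallyLipschitzOn (convex_Ioi 0) fun _ hx =>
    (Real.contDiffAt_rpow_const_of_ne (ne_of_gt hx)).contDiffWithinAt

theorem strictMonoOn_Icc_of_hasDerivAt_pos {g g' : ℝ → ℝ} {a b : ℝ}
    (hg : ∀ x ∈ Icc a b, HasDerivAt g (g' x) x) (hpos : ∀ x ∈ Ioo a b, 0 < g' x) :
    StrictMonoOn g (Icc a b) :=
  strictMonoOn_of_hasDerivWithinAt_pos (convex_Icc a b)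
    (fun x hx => (hg x hx).continuousAt.continuousWithinAt)
    (fun x hx => (hg x (interior_subset hx)).hasDerivWithinAt)
    (fun x hx => hpos x (by rwa [interior_Icc] at hx))

theorem AntitoneOn.lt_of_hasDerivAt_neg {u u' : ℝ → ℝ} {x y : ℝ} (hmono : AntitoneOn u (Icc x y))
    (hc : ContinuousOn u (Icc x y)) (hd : ∀ t ∈ Ioo x y, HasDerivAt u (u' t) t)
    (hneg : ∀ t ∈ Ioo x y, 0 < u t → u' t < 0) (hxy : x < y) (hx : 0 < u x) : u y < u x := by
  rcases le_or_gt (u y) 0 with hy | hy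
  · linarith
  refine strictAntiOn_of_hasDerivWithinAt_neg (convex_Icc x y) hc
    (fun t ht => (hd t (by rwa [interior_Icc] at ht)).hasDerivWithinAt) (fun t ht => ?_)
    (left_mem_Icc.2 hxy.le) (right_mem_Icc.2 hxy.le) hxy
  rw [interior_Icc] at ht
  exact hneg t ht (hy.trans_le (hmono (Ioo_subset_Icc_self ht) (right_mem_Icc.2 hxy.le) ht.2.le))

noncomputable def radialFlux (d : ℕ) (p : ℝ) (u' : ℝ → ℝ) (s : ℝ) : ℝ :=
  s ^ (d - 1) * |u' s| ^ (p - 2) * u' s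

theorem radialFlux_lt_radialFlux_iff {d : ℕ} {p s : ℝ} {v w : ℝ → ℝ} (hp : 1 < p) (hs : 0 < s) :
    radialFlux d p v s < radialFlux d p w s ↔ v s < w s := by
  simp only [radialFlux, mul_assoc]
  rw [mul_lt_mul_iff_right₀ (pow_pos hs _)]
  exact (strictMono_abs_rpow_mul_self hp).lt_iff_lt

theorem exists_abs_sub_le_mul_abs_radialFlux_sub (d : ℕ) {p a b : ℝ} {v₁ v₂ : ℝ → ℝ} (hp : 1 < p)
    (ha : 0 < a) (hv₁ : ContinuousOn v₁ (Icc a b)) (hv₂ : ContinuousOn v₂ (Icc a b))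
    (hneg₁ : ∀ t ∈ Icc a b, v₁ t < 0) (hneg₂ : ∀ t ∈ Icc a b, v₂ t < 0) :
    ∃ K ≥ 0, ∀ t ∈ Icc a b,
      |v₁ t - v₂ t| ≤ K * |radialFlux d p v₁ t - radialFlux d p v₂ t| := by
  have hcont {v : ℝ → ℝ} (hv : ContinuousOn v (Icc a b)) :
      ContinuousOn (fun t => |v t| ^ (p - 1)) (Icc a b) :=
    hv.abs.rpow_const fun _ _ => Or.inr (by linarith)
  have hpos {v : ℝ → ℝ} (hneg : ∀ t ∈ Icc a b, v t < 0) :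
      MapsTo (fun t => |v t| ^ (p - 1)) (Icc a b) (Ioi 0) :=
    fun t ht => Real.rpow_pos_of_pos (abs_pos.2 (hneg t ht).ne) _
  obtain ⟨L, hL⟩ := (locallyLipschitzOn_rpow_const (p - 1)⁻¹).exists_dist_comp_le isCompact_Icc
    (hcont hv₁) (hcont hv₂) (hpos hneg₁) (hpos hneg₂)
  refine ⟨L / a ^ (d - 1), by positivity, fun t ht => ?_⟩
  have ht0 : 0 < t := ha.trans_le ht.1
  have hflux {v : ℝ → ℝ} (hv : v t < 0) :
      radialFlux d p v t = -(t ^ (d - 1) * |v t| ^ (p - 1)) := by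
    rw [radialFlux, mul_assoc, abs_rpow_mul_self_of_neg hv]
    ring
  have hinv {v : ℝ → ℝ} (hv : v t < 0) : (|v t| ^ (p - 1)) ^ (p - 1)⁻¹ = -v t := by
    rw [Real.rpow_rpow_inv (abs_nonneg _) (by linarith), abs_of_neg hv]
  calc |v₁ t - v₂ t|
      = |(|v₁ t| ^ (p - 1)) ^ (p - 1)⁻¹ - (|v₂ t| ^ (p - 1)) ^ (p - 1)⁻¹| := by
        rw [hinv (hneg₁ t ht), hinv (hneg₂ t ht), abs_sub_comm]
        ring_nf
    _ ≤ L * |(|v₁ t| ^ (p - 1)) - |v₂ t| ^ (p - 1)| := by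
        simpa only [Real.dist_eq] using hL t ht
    _ = L / t ^ (d - 1) * |radialFlux d p v₁ t - radialFlux d p v₂ t| := by
        rw [hflux (hneg₁ t ht), hflux (hneg₂ t ht), neg_sub_neg, ← mul_sub, abs_mul,
          abs_of_pos (pow_pos ht0 _), abs_sub_comm]
        field_simp
    _ ≤ L / a ^ (d - 1) * |radialFlux d p v₁ t - radialFlux d p v₂ t| := by
        gcongr
        exact ht.1

/-- `u` is `C¹` on `I` with derivative `u'` and solves the radial form
`(r ^ (d - 1) * |u'| ^ (p - 2) * u')' = r ^ (d - 1) * f u` of `Δ_p u = f u`. -/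
structure IsRadialSolution (d : ℕ) (p : ℝ) (f : ℝ → ℝ) (I : Set ℝ) (u u' : ℝ → ℝ) : Prop where
  hasDerivAt : ∀ r ∈ I, HasDerivAt u (u' r) r
  continuousOn_deriv : ContinuousOn u' I
  hasDerivAt_radialFlux : ∀ r ∈ I, HasDerivAt (radialFlux d p u') (r ^ (d - 1) * f (u r)) r

namespace IsRadialSolution

variable {d : ℕ} {p : ℝ} {f : ℝ → ℝ} {I J : Set ℝ} {u u' u₁ u₁' u₂ u₂' : ℝ → ℝ}

theorem mono (h : IsRadialSolution d p f I u u') (hJI : J ⊆ I) : IsRadialSolution d p f J u u' :=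
  ⟨fun r hr => h.hasDerivAt r (hJI hr), h.continuousOn_deriv.mono hJI,
    fun r hr => h.hasDerivAt_radialFlux r (hJI hr)⟩

theorem continuousOn (h : IsRadialSolution d p f I u u') : ContinuousOn u I :=
  fun r hr => (h.hasDerivAt r hr).continuousAt.continuousWithinAt

theorem of_hasDerivWithinAt_Ici {a : ℝ} (hu : ∀ r ∈ Ici a, HasDerivWithinAt u (u' r) (Ici a) r)
    (hc : ContinuousOn u' (Ici a))
    (hflux : ∀ r ∈ Ioi a, HasDerivAt (radialFlux d p u') (r ^ (d - 1) * f (u r)) r) :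
    IsRadialSolution d p f (Ioi a) u u' :=
  ⟨fun r hr => (hu r (Ioi_subset_Ici_self hr)).hasDerivAt (Ici_mem_nhds hr),
    hc.mono Ioi_subset_Ici_self, hflux⟩

theorem hasDerivAt_radialFlux_sub (h₁ : IsRadialSolution d p f I u₁ u₁')
    (h₂ : IsRadialSolution d p f I u₂ u₂') {r : ℝ} (hr : r ∈ I) :
    HasDerivAt (fun s => radialFlux d p u₁' s - radialFlux d p u₂' s)
      (r ^ (d - 1) * (f (u₁ r) - f (u₂ r))) r := by
  rw [mul_sub]
  exact (h₁.hasDerivAt_radialFlux r hr).sub (h₂.hasDerivAt_radialFlux r hr)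

theorem exists_sub_lt_sub_of_deriv_eq (h₁ : IsRadialSolution d p f I u₁ u₁')
    (h₂ : IsRadialSolution d p f I u₂ u₂') (hp : 1 < p) (hf : StrictMonoOn f (Ici 0))
    (hI : IsOpen I) (hIpos : I ⊆ Ioi 0) (hu₂ : ∀ t ∈ I, 0 ≤ u₂ t) {ρ : ℝ} (hρ : ρ ∈ I)
    (hlt : u₂ ρ < u₁ ρ) (hderiv : u₁' ρ = u₂' ρ) :
    ∃ t, ρ < t ∧ u₁ ρ - u₂ ρ < u₁ t - u₂ t := by
  have hnhds : I ∩ {s | u₂ s < u₁ s} ∈ 𝓝 ρ :=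
    inter_mem (hI.mem_nhds hρ) ((h₂.hasDerivAt ρ hρ).continuousAt.eventually_lt
      (h₁.hasDerivAt ρ hρ).continuousAt hlt)
  obtain ⟨ε, hε, hball⟩ := Metric.mem_nhds_iff.1 hnhds
  have hsub : Icc ρ (ρ + ε / 2) ⊆ I ∩ {s | u₂ s < u₁ s} := fun s hs => hball <| by
    rw [Metric.mem_ball, Real.dist_eq, abs_of_nonneg (by linarith [hs.1])]
    linarith [hs.2]
  have hflux : StrictMonoOn (fun s => radialFlux d p u₁' s - radialFlux d p u₂' s)
      (Icc ρ (ρ + ε / 2)) := by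
    refine strictMonoOn_Icc_of_hasDerivAt_pos
      (fun s hs => h₁.hasDerivAt_radialFlux_sub h₂ (hsub hs).1) fun s hs => ?_
    obtain ⟨hsI, hs₂₁⟩ := hsub (Ioo_subset_Icc_self hs)
    exact mul_pos (pow_pos (hIpos hsI) _) (sub_pos.2 (hf (hu₂ s hsI) (le_of_lt
      ((hu₂ s hsI).trans_lt hs₂₁)) hs₂₁))
  have hgap : StrictMonoOn (fun s => u₁ s - u₂ s) (Icc ρ (ρ + ε / 2)) := by
    refine strictMonoOn_Icc_of_hasDerivAt_pos
      (fun s hs => (h₁.hasDerivAt s (hsub hs).1).sub (h₂.hasDerivAt s (hsub hs).1))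
      fun s hs => sub_pos.2 ?_
    have hρs := hflux (left_mem_Icc.2 (by linarith)) (Ioo_subset_Icc_self hs) hs.1
    have hflux_eq : radialFlux d p u₁' ρ = radialFlux d p u₂' ρ := by simp only [radialFlux, hderiv]
    simp only [hflux_eq, sub_self, sub_pos] at hρs
    exact (radialFlux_lt_radialFlux_iff hp (hIpos (hsub (Ioo_subset_Icc_self hs)).1)).1 hρs
  exact ⟨ρ + ε / 2, by linarith,
    hgap (left_mem_Icc.2 (by linarith)) (right_mem_Icc.2 (by linarith)) (by linarith)⟩

theorem le_of_le_of_tendsto_zero {a : ℝ} (h₁ : IsRadialSolution d p f (Ioi a) u₁ u₁')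
    (h₂ : IsRadialSolution d p f (Ioi a) u₂ u₂') (hp : 1 < p) (hf : StrictMonoOn f (Ici 0))
    (ha : 0 ≤ a) (hc₁ : ContinuousOn u₁ (Ici a)) (hc₂ : ContinuousOn u₂ (Ici a))
    (hu₂ : ∀ t ∈ Ici a, 0 ≤ u₂ t) (hlim : Tendsto u₁ atTop (𝓝 0)) (hle : u₁ a ≤ u₂ a) :
    ∀ t ∈ Ici a, u₁ t ≤ u₂ t := by
  by_contra! ⟨s₀, hs₀, hlt⟩
  obtain ⟨R, hR⟩ := eventually_atTop.1 (hlim.eventually (gt_mem_nhds (sub_pos.2 hlt)))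
  obtain ⟨ρ, hρ, hmax⟩ := isCompact_Icc.exists_isMaxOn
    (nonempty_Icc.2 (hs₀.trans (le_max_right R s₀))) ((hc₁.sub hc₂).mono Icc_subset_Ici_self)
  have hs₀ρ : u₁ s₀ - u₂ s₀ ≤ u₁ ρ - u₂ ρ := hmax ⟨hs₀, le_max_right R s₀⟩
  have hglobal : ∀ t ∈ Ici a, u₁ t - u₂ t ≤ u₁ ρ - u₂ ρ := fun t ht => by
    rcases le_or_gt t (max R s₀) with h | h
    · exact hmax ⟨ht, h⟩
    · linarith [hR t (le_of_lt ((le_max_left _ _).trans_lt h)), hu₂ t ht]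
  have hρa : a < ρ := lt_of_le_of_ne hρ.1 (by rintro rfl; linarith)
  have hderiv : u₁' ρ = u₂' ρ := by
    have hloc : IsLocalMax (fun s => u₁ s - u₂ s) ρ := by
      filter_upwards [Ioi_mem_nhds hρa] with t ht using hglobal t (Ioi_subset_Ici_self ht)
    linarith [hloc.hasDerivAt_eq_zero ((h₁.hasDerivAt ρ hρa).sub (h₂.hasDerivAt ρ hρa))]
  obtain ⟨t, hρt, hgt⟩ := h₁.exists_sub_lt_sub_of_deriv_eq h₂ hp hf isOpen_Ioi
    (Ioi_subset_Ioi ha) (fun t ht => hu₂ t (Ioi_subset_Ici_self ht)) hρa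
    (by linarith) hderiv
  linarith [hglobal t (hρa.le.trans hρt.le)]

theorem eqOn_of_eq_of_deriv_eq {a b : ℝ} (h₁ : IsRadialSolution d p f (Icc a b) u₁ u₁')
    (h₂ : IsRadialSolution d p f (Icc a b) u₂ u₂') (hp : 1 < p)
    (hf : LocallyLipschitzOn (Ioi 0) f) (ha : 0 < a) (hu₁ : ∀ t ∈ Icc a b, 0 < u₁ t)
    (hu₂ : ∀ t ∈ Icc a b, 0 < u₂ t) (hu₁' : ∀ t ∈ Icc a b, u₁' t < 0)
    (hu₂' : ∀ t ∈ Icc a b, u₂' t < 0) (heq : u₁ b = u₂ b) (hderiv : u₁' b = u₂' b) :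
    EqOn u₁ u₂ (Icc a b) := by
  obtain ⟨L, hL⟩ := hf.exists_dist_comp_le isCompact_Icc h₁.continuousOn h₂.continuousOn hu₁ hu₂
  obtain ⟨K, hK0, hK⟩ := exists_abs_sub_le_mul_abs_radialFlux_sub d hp ha
    h₁.continuousOn_deriv h₂.continuousOn_deriv hu₁' hu₂'
  have hzero := eq_zero_of_norm_deriv_le_mul_norm_of_eq_zero_left
    (f := fun t => (u₁ t - u₂ t, radialFlux d p u₁' t - radialFlux d p u₂' t))
    (f' := fun t => (u₁' t - u₂' t, t ^ (d - 1) * (f (u₁ t) - f (u₂ t))))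
    (K := max K (b ^ (d - 1) * L))
    (fun t ht => ((h₁.hasDerivAt t ht).sub (h₂.hasDerivAt t ht)).prodMk
      (h₁.hasDerivAt_radialFlux_sub h₂ ht))
    (by simp [heq, radialFlux, hderiv]) fun t ht => ?_
  · exact fun t ht => sub_eq_zero.1 (congrArg Prod.fst (hzero t ht))
  have ht0 : 0 < t := ha.trans_le ht.1
  have hb : 0 < b := ht0.trans_le ht.2
  have hKL : 0 ≤ b ^ (d - 1) * L := by positivity
  have hflux : |t ^ (d - 1) * (f (u₁ t) - f (u₂ t))| ≤ b ^ (d - 1) * L * |u₁ t - u₂ t| := by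
    rw [abs_mul, abs_of_pos (pow_pos ht0 _), mul_assoc]
    exact mul_le_mul (pow_le_pow_left₀ ht0.le ht.2 _) (by simpa only [Real.dist_eq] using hL t ht)
      (abs_nonneg _) (by positivity)
  simp only [Prod.norm_def, Real.norm_eq_abs]
  refine max_le ((hK t ht).trans ?_) (hflux.trans ?_) <;>
    exact mul_le_mul (by simp) (by simp) (abs_nonneg _) (le_max_of_le_left hK0)

theorem eqOn_Icc_of_touch {a τ : ℝ} (h₁ : IsRadialSolution d p f (Ioi a) u₁ u₁')
    (h₂ : IsRadialSolution d p f (Ioi a) u₂ u₂') (hp : 1 < p) (hf : LocallyLipschitzOn (Ioi 0) f)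
    (ha : 0 ≤ a) (hc₁ : ContinuousOn u₁ (Ici a)) (hc₂ : ContinuousOn u₂ (Ici a))
    (hmono₁ : AntitoneOn u₁ (Ioi a)) (hmono₂ : AntitoneOn u₂ (Ioi a))
    (hneg₁ : ∀ t ∈ Ioi a, 0 < u₁ t → u₁' t < 0) (hneg₂ : ∀ t ∈ Ioi a, 0 < u₂ t → u₂' t < 0)
    (hle : ∀ t ∈ Ioi a, u₁ t ≤ u₂ t) (hτ : a < τ) (heq : u₁ τ = u₂ τ) (hpos : 0 < u₂ τ) :
    EqOn u₁ u₂ (Icc a τ) := by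
  have hderiv : u₁' τ = u₂' τ := by
    have hloc : IsLocalMax (fun s => u₁ s - u₂ s) τ := by
      filter_upwards [Ioi_mem_nhds hτ] with t ht
      linarith [hle t ht]
    linarith [hloc.hasDerivAt_eq_zero ((h₁.hasDerivAt τ hτ).sub (h₂.hasDerivAt τ hτ))]
  have hIoc : EqOn u₁ u₂ (Ioc a τ) := fun s hs => by
    obtain ⟨c, hac, hcs⟩ := exists_between hs.1
    have hsub : Icc c τ ⊆ Ioi a := fun t ht => hac.trans_le ht.1
    have hpos₂ : ∀ t ∈ Icc c τ, 0 < u₂ t := fun t ht =>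
      hpos.trans_le (hmono₂ (hsub ht) hτ ht.2)
    have hpos₁ : ∀ t ∈ Icc c τ, 0 < u₁ t := fun t ht =>
      (heq ▸ hpos).trans_le (hmono₁ (hsub ht) hτ ht.2)
    exact (h₁.mono hsub).eqOn_of_eq_of_deriv_eq (h₂.mono hsub) hp hf (ha.trans_lt hac) hpos₁ hpos₂
      (fun t ht => hneg₁ t (hsub ht) (hpos₁ t ht)) (fun t ht => hneg₂ t (hsub ht) (hpos₂ t ht))
      heq hderiv ⟨hcs.le, hs.2⟩
  exact hIoc.of_subset_closure (hc₁.mono Icc_subset_Ici_self) (hc₂.mono Icc_subset_Ici_self)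
    Ioc_subset_Icc_self (by rw [closure_Ioc hτ.ne])

end IsRadialSolution

theorem stmt4_general (d : ℕ) (hd : 1 ≤ d) (p q r₁ r₂ : ℝ) (hp : (d : ℝ) < p) (hq : 0 < q)
    (hr₁ : 0 < r₁) (hr : r₁ < r₂)
    (u₁ u₁' u₂ u₂' : ℝ → ℝ)
    (h1deriv : ∀ r ∈ Ici r₁, HasDerivWithinAt u₁ (u₁' r) (Ici r₁) r)
    (h1c : ContinuousOn u₁' (Ici r₁))
    (h1mono : AntitoneOn u₁ (Ici r₁))
    (h1val : u₁ r₁ = 1)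
    (h1lim : Tendsto u₁ atTop (𝓝 0))
    (h1neg : ∀ r ∈ Ioi r₁, 0 < u₁ r → u₁' r < 0)
    (h1ode : ∀ r ∈ Ioi r₁,
      HasDerivAt (fun s => s ^ (d - 1) * |u₁' s| ^ (p - 2) * u₁' s)
        (r ^ (d - 1) * u₁ r ^ q) r)
    (h2deriv : ∀ r ∈ Ici r₂, HasDerivWithinAt u₂ (u₂' r) (Ici r₂) r)
    (h2c : ContinuousOn u₂' (Ici r₂))
    (h2mono : AntitoneOn u₂ (Ici r₂))
    (h2nonneg : ∀ r ∈ Ici r₂, 0 ≤ u₂ r)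
    (h2val : u₂ r₂ = 1)
    (h2neg : ∀ r ∈ Ioi r₂, 0 < u₂ r → u₂' r < 0)
    (h2ode : ∀ r ∈ Ioi r₂,
      HasDerivAt (fun s => s ^ (d - 1) * |u₂' s| ^ (p - 2) * u₂' s)
        (r ^ (d - 1) * u₂ r ^ q) r) :
    ∀ r, r₂ ≤ r → 0 < u₂ r → u₁ r < u₂ r := by
  have hp1 : 1 < p := lt_of_le_of_lt (by exact_mod_cast hd) hp
  have hr₂ : 0 < r₂ := hr₁.trans hr
  have hc₁ : ContinuousOn u₁ (Ici r₁) := fun s hs => (h1deriv s hs).continuousWithinAt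
  have hc₂ : ContinuousOn u₂ (Ici r₂) := fun s hs => (h2deriv s hs).continuousWithinAt
  have hsol₁ : IsRadialSolution d p (· ^ q) (Ioi r₁) u₁ u₁' :=
    .of_hasDerivWithinAt_Ici h1deriv h1c h1ode
  have hsol₂ : IsRadialSolution d p (· ^ q) (Ioi r₂) u₂ u₂' :=
    .of_hasDerivWithinAt_Ici h2deriv h2c h2ode
  have hIoi : Ioi r₂ ⊆ Ioi r₁ := Ioi_subset_Ioi hr.le
  have hIci : Ici r₂ ⊆ Ici r₁ := Ici_subset_Ici.2 hr.le
  have hstart : u₁ r₂ < u₂ r₂ := by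
    rw [h2val, ← h1val]
    exact (h1mono.mono Icc_subset_Ici_self).lt_of_hasDerivAt_neg (hc₁.mono Icc_subset_Ici_self)
      (fun t ht => hsol₁.hasDerivAt t ht.1) (fun t ht => h1neg t ht.1) hr (by simp [h1val])
  have hle := (hsol₁.mono hIoi).le_of_le_of_tendsto_zero hsol₂ hp1
    (Real.strictMonoOn_rpow_Ici_of_exponent_pos hq) hr₂.le (hc₁.mono hIci) hc₂ h2nonneg h1lim
    hstart.le
  intro r hr₂r hpos
  by_contra! hge
  have hr₂r' : r₂ < r := lt_of_le_of_ne hr₂r (by rintro rfl; linarith)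
  have hcoinc := (hsol₁.mono hIoi).eqOn_Icc_of_touch hsol₂ hp1 (locallyLipschitzOn_rpow_const q)
    hr₂.le (hc₁.mono hIci) hc₂ ((h1mono.mono hIci).mono Ioi_subset_Ici_self)
    (h2mono.mono Ioi_subset_Ici_self) (fun t ht => h1neg t (hIoi ht)) h2neg
    (fun t ht => hle t (Ioi_subset_Ici_self ht)) hr₂r' (le_antisymm (hle r hr₂r) hge) hpos
  linarith [hcoinc (left_mem_Icc.2 hr₂r)]

/-- Comparison principle for the `C¹` nonincreasing solutions of the
exterior Dirichlet problems `Δ_p u = u^q` on `(rᵢ,∞)`, `u(rᵢ)=1`, `u(∞)=0`: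
if `r₁ < r₂` then `u₂ > u₁` wherever `u₂ > 0` (on `[r₂,∞)`). -/
theorem stmt4 (d : ℕ) (hd : 1 ≤ d) (p q r₁ r₂ : ℝ) (hp : (d : ℝ) < p) (hq : 0 < q)
    (hr₁ : 0 < r₁) (hr : r₁ < r₂)
    (u₁ u₁' u₂ u₂' : ℝ → ℝ)
    (h1deriv : ∀ r ∈ Ici r₁, HasDerivWithinAt u₁ (u₁' r) (Ici r₁) r)
    (h1c : ContinuousOn u₁' (Ici r₁))
    (h1mono : AntitoneOn u₁ (Ici r₁))
    (h1nonneg : ∀ r ∈ Ici r₁, 0 ≤ u₁ r)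
    (h1val : u₁ r₁ = 1)
    (h1lim : Tendsto u₁ atTop (𝓝 0))
    (h1neg : ∀ r ∈ Ioi r₁, 0 < u₁ r → u₁' r < 0)
    (h1ode : ∀ r ∈ Ioi r₁,
      HasDerivAt (fun s => s ^ (d - 1) * |u₁' s| ^ (p - 2) * u₁' s)
        (r ^ (d - 1) * u₁ r ^ q) r)
    (h2deriv : ∀ r ∈ Ici r₂, HasDerivWithinAt u₂ (u₂' r) (Ici r₂) r)
    (h2c : ContinuousOn u₂' (Ici r₂))
    (h2mono : AntitoneOn u₂ (Ici r₂))
    (h2nonneg : ∀ r ∈ Ici r₂, 0 ≤ u₂ r)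
    (h2val : u₂ r₂ = 1)
    (h2lim : Tendsto u₂ atTop (𝓝 0))
    (h2neg : ∀ r ∈ Ioi r₂, 0 < u₂ r → u₂' r < 0)
    (h2ode : ∀ r ∈ Ioi r₂,
      HasDerivAt (fun s => s ^ (d - 1) * |u₂' s| ^ (p - 2) * u₂' s)
        (r ^ (d - 1) * u₂ r ^ q) r) :
    ∀ r, r₂ ≤ r → 0 < u₂ r → u₁ r < u₂ r :=
  stmt4_general d hd p q r₁ r₂ hp hq hr₁ hr u₁ u₁' u₂ u₂' h1deriv h1c h1mono h1val h1lim h1neg h1ode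
    h2deriv h2c h2mono h2nonneg h2val h2neg h2ode
end

section
/- Let q ≥ 0 and let d be an integer and p a real with p > d > 1. Suppose u, v : (0,∞) → ℝ are continuously differentiable, nonincreasing, nonnegative, satisfy lim_{r→0⁺} u(r) = lim_{r→0⁺} v(r) = 1 and lim_{r→∞} u(r) = lim_{r→∞} v(r) = 0, have strictly negative derivative at every point where the function is positive, and the functions r ↦ r^{d−1}|u'(r)|^{p−2}u'(r) and r ↦ r^{d−1}|v'(r)|^{p−2}v'(r) are differentiable on (0,∞) with derivatives r^{d−1} u(r)^q and r^{d−1} v(r)^q respectively. Then u(r) = v(r) for all r > 0. -/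
open Filter Set Topology

/-! Comparison principle. If `u - v` were positive somewhere, then, as it tends to `0` at `0⁺` and
at `∞`, it would have a positive local maximum at some `m`, where `u' m = v' m`. On an interval
`[t, m]` on which `v ≤ u`, the flux difference `r^(d-1) (φ (u' r) - φ (v' r))`, with
`φ t = |t|^(p-2) t`, has derivative `r^(d-1) (u^q - v^q) ≥ 0` and vanishes at `m`; so it is
nonpositive, and `u' ≤ v'` on `[t, m]` because `φ` is strictly increasing. Hence `u - v`
decreases on `[t, m]`, which is absurd when `t` is the last point before `m` with
`u - v ≤ (u m - v m) / 2`. Exchanging `u` and `v` gives equality. -/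

lemma abs_rpow_sub_two_mul_self_of_nonneg {p t : ℝ} (hp : 1 < p) (ht : 0 ≤ t) :
    |t| ^ (p - 2) * t = t ^ (p - 1) := by
  rcases ht.eq_or_lt with rfl | ht
  · rw [Real.zero_rpow (by linarith), mul_zero]
  · rw [abs_of_pos ht, ← Real.rpow_add_one ht.ne']
    ring_nf

lemma strictMono_abs_rpow_sub_two_mul_self {p : ℝ} (hp : 1 < p) :
    StrictMono fun t : ℝ => |t| ^ (p - 2) * t := by
  refine strictMono_of_odd_strictMonoOn_nonneg (fun t => by simp only [abs_neg, mul_neg]) ?_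
  intro s hs t ht hst
  simp only [abs_rpow_sub_two_mul_self_of_nonneg hp hs, abs_rpow_sub_two_mul_self_of_nonneg hp ht]
  exact Real.rpow_lt_rpow hs hst (by linarith)

section Comparison

variable {d : ℕ} {p q s m : ℝ} {u u' v v' : ℝ → ℝ}

lemma deriv_le_deriv_of_radial_pLaplace (hp : 1 < p) (hq : 0 ≤ q) (hs : 0 < s)
    (huode : ∀ x ∈ Icc s m, HasDerivAt (fun r => r ^ (d - 1) * |u' r| ^ (p - 2) * u' r)
      (x ^ (d - 1) * u x ^ q) x)
    (hvode : ∀ x ∈ Icc s m, HasDerivAt (fun r => r ^ (d - 1) * |v' r| ^ (p - 2) * v' r)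
      (x ^ (d - 1) * v x ^ q) x)
    (hv : ∀ x ∈ Ioo s m, 0 ≤ v x) (hvu : ∀ x ∈ Ioo s m, v x ≤ u x) (hm : u' m = v' m) :
    ∀ x ∈ Icc s m, u' x ≤ v' x := by
  set w : ℝ → ℝ := fun r =>
    r ^ (d - 1) * |u' r| ^ (p - 2) * u' r - r ^ (d - 1) * |v' r| ^ (p - 2) * v' r
  have hw : ∀ x ∈ Icc s m, HasDerivAt w (x ^ (d - 1) * u x ^ q - x ^ (d - 1) * v x ^ q) x :=
    fun x hx => (huode x hx).sub (hvode x hx)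
  have hw_mono : MonotoneOn w (Icc s m) := by
    refine monotoneOn_of_hasDerivWithinAt_nonneg (convex_Icc s m)
      (fun x hx => (hw x hx).continuousAt.continuousWithinAt)
      (fun x hx => (hw x (interior_subset hx)).hasDerivWithinAt) fun x hx => ?_
    rw [interior_Icc] at hx
    have hx0 : 0 ≤ x ^ (d - 1) := pow_nonneg (hs.trans hx.1).le _
    have := mul_le_mul_of_nonneg_left (Real.rpow_le_rpow (hv x hx) (hvu x hx) hq) hx0
    linarith
  intro x hx
  have hwx : w x ≤ w m := hw_mono hx (right_mem_Icc.2 (hx.1.trans hx.2)) hx.2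
  have hwm : w m = 0 := by simp only [w, hm, sub_self]
  have hflux :
      x ^ (d - 1) * (|u' x| ^ (p - 2) * u' x) ≤ x ^ (d - 1) * (|v' x| ^ (p - 2) * v' x) := by
    simp only [w] at hwx hwm
    linarith
  exact (strictMono_abs_rpow_sub_two_mul_self hp).le_iff_le.1
    (le_of_mul_le_mul_left hflux (pow_pos (hs.trans_le hx.1) _))

lemma sub_le_sub_of_radial_pLaplace (hp : 1 < p) (hq : 0 ≤ q) (hs : 0 < s) (hsm : s ≤ m)
    (hu : ∀ x ∈ Icc s m, HasDerivAt u (u' x) x) (hv : ∀ x ∈ Icc s m, HasDerivAt v (v' x) x)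
    (huode : ∀ x ∈ Icc s m, HasDerivAt (fun r => r ^ (d - 1) * |u' r| ^ (p - 2) * u' r)
      (x ^ (d - 1) * u x ^ q) x)
    (hvode : ∀ x ∈ Icc s m, HasDerivAt (fun r => r ^ (d - 1) * |v' r| ^ (p - 2) * v' r)
      (x ^ (d - 1) * v x ^ q) x)
    (hv0 : ∀ x ∈ Ioo s m, 0 ≤ v x) (hvu : ∀ x ∈ Ioo s m, v x ≤ u x) (hm : u' m = v' m) :
    u m - v m ≤ u s - v s := by
  have hderiv := deriv_le_deriv_of_radial_pLaplace hp hq hs huode hvode hv0 hvu hm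
  refine antitoneOn_of_hasDerivWithinAt_nonpos (convex_Icc s m)
    (fun x hx => ((hu x hx).sub (hv x hx)).continuousAt.continuousWithinAt)
    (fun x hx => ((hu x (interior_subset hx)).sub (hv x (interior_subset hx))).hasDerivWithinAt)
    (fun x hx => sub_nonpos.2 (hderiv x (interior_subset hx)))
    (left_mem_Icc.2 hsm) (right_mem_Icc.2 hsm) hsm

end Comparison

lemma exists_isLocalMax_gt_of_tendsto {f : ℝ → ℝ} {a c x : ℝ} (hf : ContinuousOn f (Ioi a))
    (ha : Tendsto f (𝓝[>] a) (𝓝 c)) (htop : Tendsto f atTop (𝓝 c)) (hx : a < x)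
    (hcx : c < f x) : ∃ m ∈ Ioi a, c < f m ∧ IsLocalMax f m := by
  obtain ⟨a', hfa', ha'⟩ := ((ha.eventually (gt_mem_nhds hcx)).and (Ioo_mem_nhdsGT hx)).exists
  obtain ⟨b, hfb, hb⟩ :=
    ((htop.eventually (gt_mem_nhds hcx)).and (eventually_gt_atTop x)).exists
  obtain ⟨m, hm, hmax⟩ := isCompact_Icc.exists_isMaxOn_mem_subset (s := Ioo a' b)
    (hf.mono fun y hy => ha'.1.trans_le hy.1) ⟨ha'.2.le, hb.le⟩ fun y hy => by
      rw [Icc_sdiff_Ioo_same (ha'.2.trans hb).le] at hy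
      rcases hy with rfl | rfl <;> assumption
  exact ⟨m, ha'.1.trans hm.1, hcx.trans_le (hmax ⟨ha'.2.le, hb.le⟩),
    hmax.isLocalMax (Icc_mem_nhds hm.1 hm.2)⟩

lemma exists_le_forall_Ioc_lt {α β : Type*} [ConditionallyCompleteLinearOrder α]
    [TopologicalSpace α] [OrderTopology α] [LinearOrder β] [TopologicalSpace β]
    [ClosedIicTopology β] {f : α → β} {a b : α} {c : β} (hab : a ≤ b)
    (hf : ContinuousOn f (Icc a b)) (ha : f a ≤ c) :
    ∃ t ∈ Icc a b, f t ≤ c ∧ ∀ x ∈ Ioc t b, c < f x := by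
  set S := Icc a b ∩ f ⁻¹' Iic c
  have hS : sSup S ∈ S := (hf.preimage_isClosed_of_isClosed isClosed_Icc isClosed_Iic).csSup_mem
    ⟨a, left_mem_Icc.2 hab, ha⟩ (bddAbove_Icc.mono inter_subset_left)
  refine ⟨sSup S, hS.1, hS.2, fun x hx => lt_of_not_ge fun hfx => hx.1.not_ge ?_⟩
  exact le_csSup (bddAbove_Icc.mono inter_subset_left) ⟨⟨hS.1.1.trans hx.1.le, hx.2⟩, hfx⟩

lemma le_of_radial_pLaplace {d : ℕ} {p q L₀ L : ℝ} {u u' v v' : ℝ → ℝ} (hp : 1 < p)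
    (hq : 0 ≤ q)
    (hu : ∀ r ∈ Ioi (0:ℝ), HasDerivAt u (u' r) r) (hu₀ : Tendsto u (𝓝[>] 0) (𝓝 L₀))
    (hu_top : Tendsto u atTop (𝓝 L))
    (huode : ∀ r ∈ Ioi (0:ℝ), HasDerivAt (fun s => s ^ (d - 1) * |u' s| ^ (p - 2) * u' s)
      (r ^ (d - 1) * u r ^ q) r)
    (hv : ∀ r ∈ Ioi (0:ℝ), HasDerivAt v (v' r) r)
    (hv_nonneg : ∀ r ∈ Ioi (0:ℝ), 0 ≤ v r)
    (hv₀ : Tendsto v (𝓝[>] 0) (𝓝 L₀)) (hv_top : Tendsto v atTop (𝓝 L))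
    (hvode : ∀ r ∈ Ioi (0:ℝ), HasDerivAt (fun s => s ^ (d - 1) * |v' s| ^ (p - 2) * v' s)
      (r ^ (d - 1) * v r ^ q) r) :
    ∀ r ∈ Ioi (0:ℝ), u r ≤ v r := by
  intro r hr
  by_contra! hvu
  set h : ℝ → ℝ := fun r => u r - v r
  have hcont : ContinuousOn h (Ioi 0) := fun x hx =>
    ((hu x hx).sub (hv x hx)).continuousAt.continuousWithinAt
  have hh₀ : Tendsto h (𝓝[>] 0) (𝓝 0) := by simpa using hu₀.sub hv₀
  obtain ⟨m, hm₀, hm_pos, hm_max⟩ := exists_isLocalMax_gt_of_tendsto hcont hh₀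
    (by simpa using hu_top.sub hv_top) hr (sub_pos.2 hvu)
  have hm : u' m = v' m :=
    sub_eq_zero.1 (hm_max.hasDerivAt_eq_zero ((hu m hm₀).sub (hv m hm₀)))
  obtain ⟨a, ha_lt, ha⟩ :=
    ((hh₀.eventually (gt_mem_nhds (half_pos hm_pos))).and (Ioo_mem_nhdsGT hm₀)).exists
  obtain ⟨t, ht, ht_le, hlt⟩ := exists_le_forall_Ioc_lt ha.2.le
    (hcont.mono fun x hx => ha.1.trans_le hx.1) ha_lt.le
  have ht₀ : 0 < t := ha.1.trans_le ht.1
  have hpos : ∀ x ∈ Icc t m, x ∈ Ioi (0:ℝ) := fun x hx => ht₀.trans_le hx.1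
  have hm_le := sub_le_sub_of_radial_pLaplace hp hq ht₀ ht.2
    (fun x hx => hu x (hpos x hx)) (fun x hx => hv x (hpos x hx))
    (fun x hx => huode x (hpos x hx)) (fun x hx => hvode x (hpos x hx))
    (fun x hx => hv_nonneg x (hpos x (Ioo_subset_Icc_self hx)))
    (fun x hx => (sub_pos.1 ((half_pos hm_pos).trans (hlt x (Ioo_subset_Ioc_self hx)))).le) hm
  linarith

theorem stmt6_general (d : ℕ) (p q : ℝ) (hq : 0 ≤ q) (hd : 1 < d) (hp : (d : ℝ) < p)
    (u u' v v' : ℝ → ℝ)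
    (huderiv : ∀ r ∈ Ioi (0:ℝ), HasDerivAt u (u' r) r)
    (hunn : ∀ r ∈ Ioi (0:ℝ), 0 ≤ u r)
    (hu0 : Tendsto u (𝓝[>] 0) (𝓝 1))
    (huinf : Tendsto u atTop (𝓝 0))
    (huode : ∀ r ∈ Ioi (0:ℝ),
      HasDerivAt (fun s => s ^ (d - 1) * |u' s| ^ (p - 2) * u' s)
        (r ^ (d - 1) * u r ^ q) r)
    (hvderiv : ∀ r ∈ Ioi (0:ℝ), HasDerivAt v (v' r) r)
    (hvnn : ∀ r ∈ Ioi (0:ℝ), 0 ≤ v r)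
    (hv0 : Tendsto v (𝓝[>] 0) (𝓝 1))
    (hvinf : Tendsto v atTop (𝓝 0))
    (hvode : ∀ r ∈ Ioi (0:ℝ),
      HasDerivAt (fun s => s ^ (d - 1) * |v' s| ^ (p - 2) * v' s)
        (r ^ (d - 1) * v r ^ q) r) :
    ∀ r > (0:ℝ), u r = v r := by
  have hp₁ : 1 < p := lt_trans (by exact_mod_cast hd) hp
  intro r hr
  exact le_antisymm
    (le_of_radial_pLaplace hp₁ hq huderiv hu0 huinf huode hvderiv hvnn hv0 hvinf hvode r hr)
    (le_of_radial_pLaplace hp₁ hq hvderiv hv0 hvinf hvode huderiv hunn hu0 huinf huode r hr)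

/-- Uniqueness of `C¹` nonincreasing solutions of
`Δ_p u = u^q` on `(0,∞)` with `u(0⁺)=1`, `u(∞)=0`, for `q ≥ 0` and `p > d > 1`. -/
theorem stmt6 (d : ℕ) (p q : ℝ) (hq : 0 ≤ q) (hd : 1 < d) (hp : (d : ℝ) < p)
    (u u' v v' : ℝ → ℝ)
    (huderiv : ∀ r ∈ Ioi (0:ℝ), HasDerivAt u (u' r) r)
    (huc : ContinuousOn u' (Ioi 0))
    (humono : AntitoneOn u (Ioi 0))
    (hunn : ∀ r ∈ Ioi (0:ℝ), 0 ≤ u r)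
    (hu0 : Tendsto u (𝓝[>] 0) (𝓝 1))
    (huinf : Tendsto u atTop (𝓝 0))
    (huneg : ∀ r ∈ Ioi (0:ℝ), 0 < u r → u' r < 0)
    (huode : ∀ r ∈ Ioi (0:ℝ),
      HasDerivAt (fun s => s ^ (d - 1) * |u' s| ^ (p - 2) * u' s)
        (r ^ (d - 1) * u r ^ q) r)
    (hvderiv : ∀ r ∈ Ioi (0:ℝ), HasDerivAt v (v' r) r)
    (hvc : ContinuousOn v' (Ioi 0))
    (hvmono : AntitoneOn v (Ioi 0))
    (hvnn : ∀ r ∈ Ioi (0:ℝ), 0 ≤ v r)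
    (hv0 : Tendsto v (𝓝[>] 0) (𝓝 1))
    (hvinf : Tendsto v atTop (𝓝 0))
    (hvneg : ∀ r ∈ Ioi (0:ℝ), 0 < v r → v' r < 0)
    (hvode : ∀ r ∈ Ioi (0:ℝ),
      HasDerivAt (fun s => s ^ (d - 1) * |v' s| ^ (p - 2) * v' s)
        (r ^ (d - 1) * v r ^ q) r) :
    ∀ r > (0:ℝ), u r = v r :=
  stmt6_general d p q hq hd hp u u' v v' huderiv hunn hu0 huinf huode hvderiv hvnn hv0 hvinf hvode
end

section
/- Let d ≥ 1 be an integer and p > d a real number. Set a = (p−d)/(d(p−1)), b = p/(p−1), 𝓑(a,b) = ∫_0^1 t^{a−1}(1−t)^{b−1} dt, R = d · 𝓑(a,b)^{−(p−1)/p}, and define u(r) = d^{−p/(p−1)} R^{p/(p−1)} ∫_{(r/R)^d}^1 t^{a−1}(1−t)^{b−1} dt for 0 ≤ r ≤ R. Then u(0) = 1, u(R) = 0, u is continuously differentiable on (0,R) with u'(r) < 0 there, lim_{r→R⁻} u'(r) = 0, and for every r ∈ (0,R) the function s ↦ s^{d−1}|u'(s)|^{p−2}u'(s) is differentiable at r with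 derivative equal to r^{d−1}. In other words, u is a closed-form solution of the free boundary problem (|u'|^{p−2}u')' + ((d−1)/r)|u'|^{p−2}u' = u^0 = 1 on (0,R), u(0)=1, u(R)=u'(R)=0. -/
/-!
Integrating the equation once gives `r^{d-1} |u'|^{p-2} u' = (r^d - R^d)/d`, i.e.
`u'(r) = -((R^d - r^d)/(d r^{d-1}))^{1/(p-1)}`; this closed form for `u'` makes every claim
about `u'` elementary. By the chain rule through `t = (r/R)^d`, the derivative of the
incomplete Beta tail is exactly this expression, because `b - 1 = 1/(p-1)` and
`d(a - 1) + (d - 1) = (1 - d)/(p-1)`. The choice of `R` normalises `u(0)`, which is a multiple of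
the complete Beta integral, to `1`.
-/

open Filter Set Topology MeasureTheory

section BetaIntegrand

variable {a b : ℝ}

lemma continuousOn_betaIntegrand :
    ContinuousOn (fun t : ℝ => t ^ (a - 1) * (1 - t) ^ (b - 1)) (Ioo 0 1) := by
  intro t ht
  have h1t : 1 - t ≠ 0 := by linarith [ht.2]
  exact ((continuousAt_id.rpow_const (Or.inl ht.1.ne')).mul
    ((continuousAt_const.sub continuousAt_id).rpow_const (Or.inl h1t))).continuousWithinAt

lemma betaIntegrand_pos {t : ℝ} (ht : t ∈ Ioo (0 : ℝ) 1) :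
    0 < t ^ (a - 1) * (1 - t) ^ (b - 1) :=
  mul_pos (Real.rpow_pos_of_pos ht.1 _) (Real.rpow_pos_of_pos (by linarith [ht.2]) _)

lemma integrableOn_betaIntegrand (ha : 0 < a) (hb : 1 ≤ b) :
    IntegrableOn (fun t : ℝ => t ^ (a - 1) * (1 - t) ^ (b - 1)) (Ioo 0 1) := by
  have hdom : IntegrableOn (fun t : ℝ => t ^ (a - 1)) (Ioo 0 1) :=
    (intervalIntegral.integrableOn_Ioo_rpow_iff zero_lt_one).2 (by linarith)
  refine hdom.mono' (continuousOn_betaIntegrand.aestronglyMeasurable measurableSet_Ioo) ?_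
  filter_upwards [ae_restrict_mem measurableSet_Ioo] with t ht
  rw [Real.norm_of_nonneg (betaIntegrand_pos ht).le]
  exact mul_le_of_le_one_right (Real.rpow_nonneg ht.1.le _)
    (Real.rpow_le_one (by linarith [ht.2]) (by linarith [ht.1]) (by linarith))

lemma setIntegral_betaIntegrand_pos (ha : 0 < a) (hb : 1 ≤ b) :
    0 < ∫ t in Ioo (0 : ℝ) 1, t ^ (a - 1) * (1 - t) ^ (b - 1) := by
  rw [setIntegral_pos_iff_support_of_nonneg_ae
    ((ae_restrict_mem measurableSet_Ioo).mono fun t ht => (betaIntegrand_pos ht).le)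
    (integrableOn_betaIntegrand ha hb),
    inter_eq_right.2 fun t ht => Function.mem_support.2 (betaIntegrand_pos ht).ne']
  simp

end BetaIntegrand

lemma betaExponents_of_natCast_lt {d : ℕ} (hd : 1 ≤ d) {p : ℝ} (hp : (d : ℝ) < p) :
    0 < (p - d) / (d * (p - 1)) ∧ 1 ≤ p / (p - 1) := by
  have hd' : (1 : ℝ) ≤ d := by exact_mod_cast hd
  exact ⟨div_pos (by linarith) (by nlinarith),
    (one_le_div (by linarith : (0 : ℝ) < p - 1)).2 (by linarith)⟩

lemma hasDerivAt_setIntegral_Ioo_left {E : Type*} [NormedAddCommGroup E] [NormedSpace ℝ E]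
    [CompleteSpace E] {f : ℝ → E} {a b x : ℝ} (hf : IntegrableOn f (Ioo a b))
    (hx : x ∈ Ioo a b) (hfx : ContinuousAt f x) :
    HasDerivAt (fun y => ∫ t in Ioo y b, f t) (-f x) x := by
  have hxb : IntervalIntegrable f volume x b :=
    (intervalIntegrable_iff_integrableOn_Ioo_of_le hx.2.le).2
      (hf.mono_set (Ioo_subset_Ioo_left hx.1.le))
  refine (intervalIntegral.integral_hasDerivAt_left hxb
    (AEStronglyMeasurable.stronglyMeasurableAtFilter_of_mem hf.aestronglyMeasurable
      (Ioo_mem_nhds hx.1 hx.2)) hfx).congr_of_eventuallyEq ?_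
  filter_upwards [Iio_mem_nhds hx.2] with y hy
  rw [intervalIntegral.integral_of_le hy.le, integral_Ioc_eq_integral_Ioo]

section RpowAlgebra

variable {p : ℝ}

lemma rpow_one_div_sub_one_rpow_sub_two_mul_self {y : ℝ} (hp : 1 < p) (hy : 0 < y) :
    (y ^ (1 / (p - 1))) ^ (p - 2) * y ^ (1 / (p - 1)) = y := by
  have hp1 : p - 1 ≠ 0 := by linarith
  rw [← Real.rpow_mul hy.le, ← Real.rpow_add hy]
  convert Real.rpow_one y using 2
  field_simp
  ring

lemma rpow_neg_mul_rpow_mul_div {c R : ℝ} (hp : 1 < p) (hc : 0 < c) (hR : 0 < R) :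
    c ^ (-(p / (p - 1))) * R ^ (p / (p - 1)) * c / R = (R / c) ^ (1 / (p - 1)) := by
  have hq : 1 / (p - 1) = p / (p - 1) - 1 := by
    have : p - 1 ≠ 0 := by linarith
    field_simp; ring
  rw [hq, Real.rpow_sub_one (div_pos hR hc).ne', Real.div_rpow hR.le hc.le, Real.rpow_neg hc.le]
  field_simp

lemma pow_rpow_mul_pow_sub_one {d : ℕ} (hd : 1 ≤ d) {s : ℝ} (hp : 1 < p) (hs : 0 < s) :
    (s ^ d) ^ ((p - d) / (d * (p - 1)) - 1) * s ^ (d - 1) =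
      ((s ^ (d - 1))⁻¹) ^ (1 / (p - 1)) := by
  have hd' : (d : ℝ) ≠ 0 := by positivity
  have hp' : p - 1 ≠ 0 := by linarith
  rw [← Real.rpow_natCast, ← Real.rpow_natCast, ← Real.rpow_mul hs.le, ← Real.rpow_add hs,
    ← Real.rpow_neg hs.le, ← Real.rpow_mul hs.le, Nat.cast_sub hd]
  congr 1
  field_simp
  ring

lemma rpow_neg_mul_mul_rpow_mul_self_eq_one {c B : ℝ} (hp : 1 < p) (hc : 0 < c) (hB : 0 < B) :
    c ^ (-(p / (p - 1))) * (c * B ^ (-((p - 1) / p))) ^ (p / (p - 1)) * B = 1 := by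
  have hexp : -((p - 1) / p) * (p / (p - 1)) = -1 := by
    have : p - 1 ≠ 0 := by linarith
    have : p ≠ 0 := by linarith
    field_simp
  rw [Real.mul_rpow hc.le (by positivity), ← Real.rpow_mul hB.le, hexp, Real.rpow_neg_one,
    Real.rpow_neg hc.le]
  field_simp

end RpowAlgebra

noncomputable def profileDeriv (d : ℕ) (p R r : ℝ) : ℝ :=
  -((R ^ d - r ^ d) / (d * r ^ (d - 1))) ^ (1 / (p - 1))

section ProfileDeriv

variable {d : ℕ} {p R r : ℝ}

lemma profileDeriv_base_pos (hd : d ≠ 0) (hr : r ∈ Ioo 0 R) :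
    0 < (R ^ d - r ^ d) / (d * r ^ (d - 1)) := by
  have hRr : r ^ d < R ^ d := pow_lt_pow_left₀ hr.2 hr.1.le hd
  have hr0 : 0 < r := hr.1
  have hd' : (0 : ℝ) < d := by exact_mod_cast Nat.pos_of_ne_zero hd
  exact div_pos (by linarith) (by positivity)

lemma profileDeriv_neg (hd : d ≠ 0) (hr : r ∈ Ioo 0 R) : profileDeriv d p R r < 0 :=
  neg_neg_of_pos (Real.rpow_pos_of_pos (profileDeriv_base_pos hd hr) _)

lemma profileDeriv_self (hp : 1 < p) : profileDeriv d p R R = 0 := by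
  have hq : 1 / (p - 1) ≠ 0 := one_div_ne_zero (by linarith)
  simp only [profileDeriv, sub_self, zero_div, Real.zero_rpow hq, neg_zero]

lemma continuousAt_profileDeriv (hd : d ≠ 0) (hp : 1 < p) (hr : 0 < r) :
    ContinuousAt (profileDeriv d p R) r := by
  have hden : (d : ℝ) * r ^ (d - 1) ≠ 0 := by positivity
  have hq : 0 ≤ 1 / (p - 1) := by
    have : 0 < p - 1 := by linarith
    positivity
  exact ((continuousAt_const.sub (continuousAt_id.pow d)).div
    (continuousAt_const.mul (continuousAt_id.pow _)) hden).rpow_const (Or.inr hq) |>.neg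

lemma flux_profileDeriv (hd : d ≠ 0) (hp : 1 < p) (hr : r ∈ Ioo 0 R) :
    r ^ (d - 1) * |profileDeriv d p R r| ^ (p - 2) * profileDeriv d p R r =
      (r ^ d - R ^ d) / d := by
  have hy := profileDeriv_base_pos hd hr
  have hd' : (d : ℝ) ≠ 0 := by exact_mod_cast hd
  have hr' : r ^ (d - 1) ≠ 0 := pow_ne_zero _ hr.1.ne'
  rw [profileDeriv, abs_neg, abs_of_pos (Real.rpow_pos_of_pos hy _), mul_neg, mul_assoc,
    rpow_one_div_sub_one_rpow_sub_two_mul_self hp hy]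
  field_simp
  ring

lemma hasDerivAt_flux_of_eqOn {g : ℝ → ℝ} (hd : d ≠ 0) (hp : 1 < p)
    (hg : EqOn g (profileDeriv d p R) (Ioo 0 R)) (hr : r ∈ Ioo 0 R) :
    HasDerivAt (fun s => s ^ (d - 1) * |g s| ^ (p - 2) * g s) (r ^ (d - 1)) r := by
  have hpoly := ((hasDerivAt_pow d r).sub_const (R ^ d)).div_const (d : ℝ)
  rw [mul_div_cancel_left₀ _ (by exact_mod_cast hd)] at hpoly
  refine hpoly.congr_of_eventuallyEq ?_
  filter_upwards [Ioo_mem_nhds hr.1 hr.2] with s hs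
  rw [hg hs, flux_profileDeriv hd hp hs]

lemma neg_profileDeriv_eq (hd : 1 ≤ d) (hp : 1 < p) (hr : r ∈ Ioo 0 R) :
    (d : ℝ) ^ (-(p / (p - 1))) * R ^ (p / (p - 1)) *
      (((r / R) ^ d) ^ ((p - d) / (d * (p - 1)) - 1) * (1 - (r / R) ^ d) ^ (p / (p - 1) - 1) *
        (d * (r / R) ^ (d - 1) / R)) = -profileDeriv d p R r := by
  have hR : 0 < R := hr.1.trans hr.2
  have hs : 0 < r / R := div_pos hr.1 hR
  have hd' : (0 : ℝ) < d := by exact_mod_cast hd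
  have hb : p / (p - 1) - 1 = 1 / (p - 1) := by
    have : p - 1 ≠ 0 := by linarith
    field_simp; ring
  have hs1 : 0 ≤ 1 - (r / R) ^ d := by
    have := pow_le_one₀ hs.le ((div_le_one hR).2 hr.2.le) (n := d)
    linarith
  calc _ = (d : ℝ) ^ (-(p / (p - 1))) * R ^ (p / (p - 1)) * d / R *
        (((r / R) ^ d) ^ ((p - d) / (d * (p - 1)) - 1) * (r / R) ^ (d - 1)) *
          (1 - (r / R) ^ d) ^ (1 / (p - 1)) := by rw [hb]; ring
    _ = ((R / d) * ((r / R) ^ (d - 1))⁻¹ * (1 - (r / R) ^ d)) ^ (1 / (p - 1)) := by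
      rw [rpow_neg_mul_rpow_mul_div hp hd' hR, pow_rpow_mul_pow_sub_one hd hp hs,
        Real.mul_rpow (by positivity) hs1, Real.mul_rpow (by positivity) (by positivity)]
    _ = -profileDeriv d p R r := by
      rw [profileDeriv, neg_neg]
      congr 1
      have hpow : (r / R) ^ d = (r / R) ^ (d - 1) * (r / R) := by
        rw [← pow_succ, Nat.sub_add_cancel hd]
      rw [hpow, div_pow]
      field_simp
      rw [← pow_succ', ← pow_succ, Nat.sub_add_cancel hd]

lemma hasDerivAt_betaTail_profile (hd : 1 ≤ d) (hp : (d : ℝ) < p) (hr : r ∈ Ioo 0 R) :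
    HasDerivAt (fun s => (d : ℝ) ^ (-(p / (p - 1))) * R ^ (p / (p - 1)) *
      ∫ t in Ioo ((s / R) ^ d) (1 : ℝ),
        t ^ ((p - d) / (d * (p - 1)) - 1) * (1 - t) ^ (p / (p - 1) - 1))
      (profileDeriv d p R r) r := by
  have hR : 0 < R := hr.1.trans hr.2
  have hx : (r / R) ^ d ∈ Ioo (0 : ℝ) 1 :=
    ⟨pow_pos (div_pos hr.1 hR) d,
      pow_lt_one₀ (div_pos hr.1 hR).le ((div_lt_one hR).2 hr.2) (by omega)⟩
  obtain ⟨ha, hb⟩ := betaExponents_of_natCast_lt hd hp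
  have hT := hasDerivAt_setIntegral_Ioo_left (integrableOn_betaIntegrand ha hb) hx
    (continuousOn_betaIntegrand.continuousAt (Ioo_mem_nhds hx.1 hx.2))
  have hg : HasDerivAt (fun s => (s / R) ^ d) (d * (r / R) ^ (d - 1) / R) r :=
    ((hasDerivAt_pow d (r / R)).comp r ((hasDerivAt_id' r).div_const R)).congr_deriv (by ring)
  have hp1 : 1 < p := by exact_mod_cast (Nat.one_le_cast.2 hd).trans_lt hp
  refine ((hT.comp r hg).const_mul _).congr_deriv ?_
  linear_combination -neg_profileDeriv_eq hd hp1 hr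

end ProfileDeriv

/-- Closed form solution (via the incomplete Beta function) of the
free boundary problem `(|u'|^{p-2}u')' + ((d-1)/r)|u'|^{p-2}u' = 1` on `(0,R)`,
with `u(0)=1`, `u(R)=u'(R)=0`, for `p > d ≥ 1` and `q = 0`. -/
theorem stmt7 (d : ℕ) (hd : 1 ≤ d) (p : ℝ) (hp : (d : ℝ) < p)
    (a b R : ℝ)
    (ha : a = (p - (d : ℝ)) / ((d : ℝ) * (p - 1)))
    (hb : b = p / (p - 1))
    (hR : R = (d : ℝ) *
      (∫ t in Ioo (0:ℝ) 1, t ^ (a - 1) * (1 - t) ^ (b - 1)) ^ (-((p - 1) / p)))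
    (u : ℝ → ℝ)
    (hu : ∀ r, u r = (d : ℝ) ^ (-(p / (p - 1))) * R ^ (p / (p - 1)) *
      ∫ t in Ioo ((r / R) ^ d) (1:ℝ), t ^ (a - 1) * (1 - t) ^ (b - 1)) :
    u 0 = 1 ∧ u R = 0 ∧
    (∀ r ∈ Ioo (0:ℝ) R, DifferentiableAt ℝ u r) ∧
    ContinuousOn (deriv u) (Ioo 0 R) ∧
    (∀ r ∈ Ioo (0:ℝ) R, deriv u r < 0) ∧
    Tendsto (deriv u) (𝓝[<] R) (𝓝 0) ∧
    (∀ r ∈ Ioo (0:ℝ) R,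
      HasDerivAt (fun s => s ^ (d - 1) * |deriv u s| ^ (p - 2) * deriv u s)
        (r ^ (d - 1)) r) := by
  have hd0 : d ≠ 0 := by omega
  have hp1 : 1 < p := by exact_mod_cast (Nat.one_le_cast.2 hd).trans_lt hp
  subst ha hb
  obtain ⟨ha, hb⟩ := betaExponents_of_natCast_lt hd hp
  have hB := setIntegral_betaIntegrand_pos ha hb
  have hR0 : 0 < R := hR ▸ by positivity
  have hderiv : ∀ r ∈ Ioo 0 R, HasDerivAt u (profileDeriv d p R r) r := by
    rw [funext hu]
    exact fun r hr => hasDerivAt_betaTail_profile hd hp hr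
  have hderivEq : EqOn (deriv u) (profileDeriv d p R) (Ioo 0 R) :=
    fun r hr => (hderiv r hr).deriv
  refine ⟨?_, ?_, fun r hr => (hderiv r hr).differentiableAt, ?_,
    fun r hr => hderivEq hr ▸ profileDeriv_neg hd0 hr, ?_,
    fun r hr => hasDerivAt_flux_of_eqOn hd0 hp1 hderivEq hr⟩
  · rw [hu, zero_div, zero_pow hd0, hR]
    exact rpow_neg_mul_mul_rpow_mul_self_eq_one hp1 (by positivity) hB
  · rw [hu, div_self hR0.ne', one_pow, Ioo_self, Measure.restrict_empty, integral_zero_measure,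
      mul_zero]
  · exact ContinuousOn.congr
      (fun r hr => (continuousAt_profileDeriv hd0 hp1 hr.1).continuousWithinAt) hderivEq
  · have hlim := (continuousAt_profileDeriv (R := R) hd0 hp1 hR0).tendsto.mono_left
      (nhdsWithin_le_nhds (s := Iio R))
    rw [profileDeriv_self hp1] at hlim
    exact hlim.congr' (eventuallyEq_of_mem (Ioo_mem_nhdsLT hR0) hderivEq.symm)
end

section
/- Let d ≥ 1 be an integer, p > 1, q ≥ 0, m ≥ 0 real numbers, and 0 < R < ∞. Suppose u : [0,R] → ℝ is continuously differentiable, nonnegative, with u'(0) = 0 and u(R) = 0, and that the function r ↦ |u'(r)|^{p−2}u'(r) is differentiable on (0,R) with (|u'|^{p−2}u')'(r) + ((d−1)/r)|u'(r)|^{p−2}u'(r) + u(r)^m = u(r)^q for every r ∈ (0,R). Then ((d(p−1)+p)/p) ∫_0^R r^{d−1}|u'(r)|^p dr − (dm/(m+1)) ∫_0^R r^{d−1} u(r)^{m+1} dr + (dq/(q+1)) ∫_0^R r^{d−1} u(r)^{q+1} dr = ((p−1)/p) · R^d · |u'(R)|^p. -/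
/-!
Write `w = |u'|^(p-2) u'`, so that the equation is `(r^(d-1) w)' = r^(d-1) (u^q - u^m)`.
Testing it with `u` and with `r u'` gives the exact derivatives
`(r^(d-1) w u)' = r^(d-1) (u^(q+1) - u^(m+1) + |u'|^p)` and
`(r^d E)' = r^(d-1) (d E - (d-1) |u'|^p)`, where
`E = (p-1)/p |u'|^p + u^(m+1)/(m+1) - u^(q+1)/(q+1)`.
The identity is the integral over `(0, R)` of the second plus `d` times the first: the boundary
terms vanish at `R` because `u R = 0`, and at `0` because `w 0 = 0`.
Since only `w`, not `u'`, is differentiable, `|u'|^p` is differentiated as `|w|^p'`, with `p'`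
the Hölder conjugate of `p`.
-/

open Filter Set Topology MeasureTheory

noncomputable def signedPow (p x : ℝ) : ℝ := |x| ^ (p - 2) * x

@[simp]
lemma signedPow_zero (p : ℝ) : signedPow p 0 = 0 := by
  simp [signedPow]

lemma continuous_signedPow {p : ℝ} (hp : 1 < p) : Continuous (signedPow p) := by
  have hderiv : deriv (fun x : ℝ => |x| ^ p) = fun x => p * signedPow p x := by
    ext x
    rw [(hasDerivAt_abs_rpow x hp).deriv, signedPow, mul_assoc]
  have hcont := (contDiff_norm_rpow (E := ℝ) hp).continuous_deriv_one.const_mul p⁻¹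
  simpa [hderiv, (zero_lt_one.trans hp).ne'] using hcont

lemma signedPow_mul_self {p : ℝ} (hp : p ≠ 0) (x : ℝ) : signedPow p x * x = |x| ^ p := by
  rcases eq_or_ne x 0 with rfl | hx
  · simp [Real.zero_rpow hp]
  · rw [signedPow, mul_assoc, ← abs_mul_abs_self, ← mul_assoc,
      ← Real.rpow_add_one (abs_ne_zero.mpr hx), ← Real.rpow_add_one (abs_ne_zero.mpr hx)]
    ring_nf

lemma abs_signedPow {p : ℝ} (hp : p ≠ 1) (x : ℝ) : |signedPow p x| = |x| ^ (p - 1) := by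
  rcases eq_or_ne x 0 with rfl | hx
  · simp [Real.zero_rpow (sub_ne_zero.mpr hp)]
  · rw [signedPow, abs_mul, abs_of_nonneg (by positivity),
      ← Real.rpow_add_one (abs_ne_zero.mpr hx)]
    ring_nf

lemma abs_signedPow_rpow {p p' : ℝ} (h : p.HolderConjugate p') (x : ℝ) :
    |signedPow p x| ^ p' = |x| ^ p := by
  rw [abs_signedPow h.lt.ne', ← Real.rpow_mul (abs_nonneg x), h.sub_one_mul_conj]

lemma signedPow_signedPow {p p' : ℝ} (h : p.HolderConjugate p') (x : ℝ) :
    signedPow p' (signedPow p x) = x := by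
  rcases eq_or_ne x 0 with rfl | hx
  · simp
  · have hx' : 0 < |x| := abs_pos.mpr hx
    rw [signedPow, abs_signedPow h.lt.ne', signedPow, ← mul_assoc, ← Real.rpow_mul hx'.le,
      ← Real.rpow_add hx']
    have hexp : (p - 1) * (p' - 2) + (p - 2) = 0 := by linear_combination h.sub_one_mul_conj
    simp [hexp]

lemma HasDerivAt.abs_rpow_of_signedPow {p p' a r : ℝ} {v : ℝ → ℝ} (h : p.HolderConjugate p')
    (hv : HasDerivAt (fun s => signedPow p (v s)) a r) :
    HasDerivAt (fun s => |v s| ^ p) (p' * v r * a) r := by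
  have := (hasDerivAt_abs_rpow (signedPow p (v r)) h.symm.lt).comp r hv
  simp only [Function.comp_def, abs_signedPow_rpow h] at this
  rwa [mul_assoc p', ← signedPow, signedPow_signedPow h] at this

lemma rpow_mul_self_eq_rpow_add_one {y : ℝ} (hy : y + 1 ≠ 0) (x : ℝ) :
    x ^ y * x = x ^ (y + 1) := by
  rcases eq_or_ne x 0 with rfl | hx
  · simp [Real.zero_rpow hy]
  · rw [Real.rpow_add_one hx]

lemma integral_Ioo_eq_sub_of_hasDerivAt {f f' : ℝ → ℝ} {a b : ℝ} (hab : a ≤ b)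
    (hf : ContinuousOn f (Icc a b)) (hderiv : ∀ x ∈ Ioo a b, HasDerivAt f (f' x) x)
    (hint : IntegrableOn f' (Ioo a b)) :
    ∫ x in Ioo a b, f' x = f b - f a := by
  rw [← integral_Ioc_eq_integral_Ioo, ← intervalIntegral.integral_of_le hab]
  exact intervalIntegral.integral_eq_sub_of_hasDerivAt_of_le hab hf hderiv
    ((intervalIntegrable_iff_integrableOn_Ioo_of_le hab).mpr hint)

section RadialEquation

variable {k : ℕ} {p p' q m r : ℝ} {u u' : ℝ → ℝ}

lemma HasDerivAt.pow_mul_of_radial {f : ℝ} {w : ℝ → ℝ} (hr : r ≠ 0)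
    (hw : HasDerivAt w (f - k / r * w r) r) :
    HasDerivAt (fun s => s ^ k * w s) (r ^ k * f) r := by
  refine ((hasDerivAt_pow k r).mul hw).congr_deriv ?_
  rcases k with _ | k
  · simp
  · simp only [Nat.cast_add, Nat.cast_one, Nat.add_sub_cancel, pow_succ]
    field_simp
    ring

noncomputable def laneEmdenEnergy (p q m a b : ℝ) : ℝ :=
  (p - 1) / p * |b| ^ p + a ^ (m + 1) / (m + 1) - a ^ (q + 1) / (q + 1)

lemma hasDerivAt_laneEmdenEnergy (h : p.HolderConjugate p') (hq : 0 ≤ q) (hm : 0 ≤ m)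
    (hu : HasDerivAt u (u' r) r)
    (hw : HasDerivAt (fun s => signedPow p (u' s))
      (u r ^ q - u r ^ m - k / r * signedPow p (u' r)) r) :
    HasDerivAt (fun s => laneEmdenEnergy p q m (u s) (u' s)) (-(k / r * |u' r| ^ p)) r := by
  have hA := hw.abs_rpow_of_signedPow h
  have hB := hu.rpow_const (p := m + 1) (Or.inr (by linarith))
  have hC := hu.rpow_const (p := q + 1) (Or.inr (by linarith))
  refine (((hA.const_mul ((p - 1) / p)).add (hB.div_const (m + 1))).sub
    (hC.div_const (q + 1))).congr_deriv ?_
  rw [add_sub_cancel_right, add_sub_cancel_right, ← signedPow_mul_self h.ne_zero]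
  have hm1 : m + 1 ≠ 0 := by positivity
  have hq1 : q + 1 ≠ 0 := by positivity
  have hp0 := h.ne_zero
  field_simp
  linear_combination (u r ^ q - u r ^ m - k / r * signedPow p (u' r)) * u' r * h.sub_one_mul_conj

noncomputable def pohozaevFunction (k : ℕ) (p q m : ℝ) (u u' : ℝ → ℝ) (s : ℝ) : ℝ :=
  s ^ (k + 1) * laneEmdenEnergy p q m (u s) (u' s)
    + (k + 1) * (s ^ k * signedPow p (u' s) * u s)

lemma continuousOn_pohozaevFunction {S : Set ℝ} (hp : 1 < p) (hq : 0 ≤ q) (hm : 0 ≤ m)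
    (hu : ContinuousOn u S) (hu' : ContinuousOn u' S) :
    ContinuousOn (pohozaevFunction k p q m u u') S := by
  have hE : ContinuousOn (fun s => laneEmdenEnergy p q m (u s) (u' s)) S :=
    ((continuousOn_const.mul (hu'.abs.rpow_const fun _ _ => Or.inr (by linarith))).add
      ((hu.rpow_const fun _ _ => Or.inr (by linarith)).div_const _)).sub
      ((hu.rpow_const fun _ _ => Or.inr (by linarith)).div_const _)
  exact ((continuousOn_pow _).mul hE).add (continuousOn_const.mul
    (((continuousOn_pow k).mul ((continuous_signedPow hp).comp_continuousOn hu')).mul hu))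

lemma hasDerivAt_pohozaevFunction (h : p.HolderConjugate p') (hq : 0 ≤ q) (hm : 0 ≤ m)
    (hr : r ≠ 0) (hu : HasDerivAt u (u' r) r)
    (hw : HasDerivAt (fun s => signedPow p (u' s))
      (u r ^ q - u r ^ m - k / r * signedPow p (u' r)) r) :
    HasDerivAt (pohozaevFunction k p q m u u')
      (((k + 1) * (p - 1) + p) / p * (r ^ k * |u' r| ^ p)
        - (k + 1) * m / (m + 1) * (r ^ k * u r ^ (m + 1))
        + (k + 1) * q / (q + 1) * (r ^ k * u r ^ (q + 1))) r := by
  have hE := hasDerivAt_laneEmdenEnergy h hq hm hu hw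
  have hflux := (hw.pow_mul_of_radial hr).mul hu
  refine (((hasDerivAt_pow (k + 1) r).mul hE).add (hflux.const_mul ((k : ℝ) + 1))).congr_deriv ?_
  have hm1 : m + 1 ≠ 0 := by positivity
  have hq1 : q + 1 ≠ 0 := by positivity
  have hp0 := h.ne_zero
  rw [← rpow_mul_self_eq_rpow_add_one hm1, ← rpow_mul_self_eq_rpow_add_one hq1,
    ← signedPow_mul_self hp0, laneEmdenEnergy, ← signedPow_mul_self hp0,
    ← rpow_mul_self_eq_rpow_add_one hm1, ← rpow_mul_self_eq_rpow_add_one hq1]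
  simp only [Nat.cast_add, Nat.cast_one, Nat.add_sub_cancel, pow_succ]
  field_simp
  ring

end RadialEquation

theorem stmt13_general (d : ℕ) (hd : 1 ≤ d) (p q m R : ℝ) (hp : 1 < p) (hq : 0 ≤ q)
    (hm : 0 ≤ m) (hR : 0 < R)
    (u u' : ℝ → ℝ)
    (hderiv : ∀ r ∈ Icc (0:ℝ) R, HasDerivWithinAt u (u' r) (Icc 0 R) r)
    (hc : ContinuousOn u' (Icc 0 R))
    (h0 : u' 0 = 0)
    (huR : u R = 0)
    (hode : ∀ r ∈ Ioo (0:ℝ) R,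
      HasDerivAt (fun s => |u' s| ^ (p - 2) * u' s)
        (u r ^ q - u r ^ m - (((d : ℝ) - 1) / r) * (|u' r| ^ (p - 2) * u' r)) r) :
    (((d : ℝ) * (p - 1) + p) / p) * (∫ r in Ioo (0:ℝ) R, r ^ (d - 1) * |u' r| ^ p)
      - (((d : ℝ) * m) / (m + 1)) * (∫ r in Ioo (0:ℝ) R, r ^ (d - 1) * u r ^ (m + 1))
      + (((d : ℝ) * q) / (q + 1)) * (∫ r in Ioo (0:ℝ) R, r ^ (d - 1) * u r ^ (q + 1))
    = ((p - 1) / p) * R ^ d * |u' R| ^ p := by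
  obtain ⟨k, rfl⟩ : ∃ k, d = k + 1 := ⟨d - 1, by omega⟩
  simp only [Nat.add_sub_cancel, Nat.cast_add, Nat.cast_one, add_sub_cancel_right] at hode ⊢
  have hu : ContinuousOn u (Icc 0 R) := fun r hr => (hderiv r hr).continuousWithinAt
  have hweighted {g : ℝ → ℝ} (hg : ContinuousOn g (Icc 0 R)) :
      IntegrableOn (fun r => r ^ k * g r) (Ioo 0 R) :=
    ((continuousOn_pow k).mul hg).integrableOn_Icc.mono_set Ioo_subset_Icc_self
  have hA : IntegrableOn (fun r => r ^ k * |u' r| ^ p) (Ioo 0 R) :=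
    hweighted (hc.abs.rpow_const fun _ _ => Or.inr (by linarith))
  have hB : IntegrableOn (fun r => r ^ k * u r ^ (m + 1)) (Ioo 0 R) :=
    hweighted (hu.rpow_const fun _ _ => Or.inr (by linarith))
  have hC : IntegrableOn (fun r => r ^ k * u r ^ (q + 1)) (Ioo 0 R) :=
    hweighted (hu.rpow_const fun _ _ => Or.inr (by linarith))
  have hboundary : pohozaevFunction k p q m u u' R - pohozaevFunction k p q m u u' 0
      = (p - 1) / p * R ^ (k + 1) * |u' R| ^ p := by
    simp [pohozaevFunction, laneEmdenEnergy, huR, h0,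
      Real.zero_rpow (by positivity : m + 1 ≠ 0), Real.zero_rpow (by positivity : q + 1 ≠ 0)]
    ring
  rw [← hboundary, ← integral_Ioo_eq_sub_of_hasDerivAt hR.le
      (continuousOn_pohozaevFunction hp hq hm hu hc)
      (fun r hr => hasDerivAt_pohozaevFunction (.conjExponent hp) hq hm hr.1.ne'
        ((hderiv r (Ioo_subset_Icc_self hr)).hasDerivAt (Icc_mem_nhds hr.1 hr.2)) (hode r hr))
      (((hA.const_mul _).sub (hB.const_mul _)).add (hC.const_mul _)),
    integral_add, integral_sub, integral_const_mul, integral_const_mul, integral_const_mul]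
  exacts [hA.const_mul _, hB.const_mul _, (hA.const_mul _).sub (hB.const_mul _), hC.const_mul _]

/-- Pohozaev-type identity for solutions of the radial generalized
Lane-Emden equation `Δ_p u + u^m = u^q` on `(0,R)`, relating the auxiliary energy
functional to the contact angle `|u'(R)|` at the free boundary. -/
theorem stmt13 (d : ℕ) (hd : 1 ≤ d) (p q m R : ℝ) (hp : 1 < p) (hq : 0 ≤ q)
    (hm : 0 ≤ m) (hR : 0 < R)
    (u u' : ℝ → ℝ)
    (hderiv : ∀ r ∈ Icc (0:ℝ) R, HasDerivWithinAt u (u' r) (Icc 0 R) r)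
    (hc : ContinuousOn u' (Icc 0 R))
    (hnn : ∀ r ∈ Icc (0:ℝ) R, 0 ≤ u r)
    (h0 : u' 0 = 0)
    (huR : u R = 0)
    (hode : ∀ r ∈ Ioo (0:ℝ) R,
      HasDerivAt (fun s => |u' s| ^ (p - 2) * u' s)
        (u r ^ q - u r ^ m - (((d : ℝ) - 1) / r) * (|u' r| ^ (p - 2) * u' r)) r) :
    (((d : ℝ) * (p - 1) + p) / p) * (∫ r in Ioo (0:ℝ) R, r ^ (d - 1) * |u' r| ^ p)
      - (((d : ℝ) * m) / (m + 1)) * (∫ r in Ioo (0:ℝ) R, r ^ (d - 1) * u r ^ (m + 1))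
      + (((d : ℝ) * q) / (q + 1)) * (∫ r in Ioo (0:ℝ) R, r ^ (d - 1) * u r ^ (q + 1))
    = ((p - 1) / p) * R ^ d * |u' R| ^ p :=
  stmt13_general d hd p q m R hp hq hm hR u u' hderiv hc h0 huR hode
end

section
/- Let d ≥ 1 be an integer, p > 1, α > 1 and R > 0 real numbers. Define H(r) = (R^{p/(p−1)} − r^{p/(p−1)})^α for 0 ≤ r ≤ R, A = (p−1)(α−1)(p/(p−1))^p α^{p−1} R^{p/(p−1)}, and B = (d + p(α−1))(p/(p−1))^{p−1} α^{p−1}. Then for every r ∈ (0,R), the function s ↦ |H'(s)|^{p−2}H'(s) is differentiable at r and (|H'|^{p−2}H')'(r) + ((d−1)/r)|H'(r)|^{p−2}H'(r) = A · H(r)^{((α−1)(p−1)−1)/α} − B · H(r)^{((α−1)(p−1))/α}. -/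
/-!
With `β = p/(p-1)` and `W(s) = R^β - s^β`, one has `H' = -αβ s^(β-1) W^(α-1)`, and since
`(β-1)(p-1) = 1` the flux collapses to `|H'|^(p-2) H' = -(αβ)^(p-1) s W^k`,
where `k = (α-1)(p-1)`.
Differentiating this product and using `s^β = R^β - W` and `β k = p(α-1)` gives the right-hand
side, once the powers of `W` are rewritten as powers of `H = W^α`.
-/

open Filter Set Topology Real

lemma rpow_sub_rpow_pos {β R s : ℝ} (hβ : 0 < β) (hs : 0 ≤ s) (hsR : s < R) :
    0 < R ^ β - s ^ β :=
  sub_pos.2 (rpow_lt_rpow hs hsR hβ)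

lemma hasDerivAt_rpow_sub_rpow_rpow {α β R s : ℝ} (hs : s ≠ 0) (hW : R ^ β - s ^ β ≠ 0) :
    HasDerivAt (fun t => (R ^ β - t ^ β) ^ α)
      (-(α * β) * s ^ (β - 1) * (R ^ β - s ^ β) ^ (α - 1)) s := by
  have h := ((hasDerivAt_rpow_const (p := β) (Or.inl hs)).const_sub (R ^ β)).rpow_const
    (p := α) (Or.inl hW)
  convert h using 1
  ring

lemma hasDerivAt_mul_rpow_sub_rpow_rpow {k β R s : ℝ} (hs : 0 < s) (hW : R ^ β - s ^ β ≠ 0) :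
    HasDerivAt (fun t => t * (R ^ β - t ^ β) ^ k)
      ((R ^ β - s ^ β) ^ k - β * k * s ^ β * (R ^ β - s ^ β) ^ (k - 1)) s := by
  have h := (hasDerivAt_id' s).mul
    (((hasDerivAt_rpow_const (p := β) (Or.inl hs.ne')).const_sub (R ^ β)).rpow_const
      (p := k) (Or.inl hW))
  have hsβ : s * s ^ (β - 1) = s ^ β := by
    rw [mul_comm, ← rpow_add_one hs.ne']
    ring_nf
  refine h.congr_deriv ?_
  linear_combination -β * k * (R ^ β - s ^ β) ^ (k - 1) * hsβ

lemma abs_neg_rpow_mul_neg {E : ℝ} (p : ℝ) (hE : 0 < E) :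
    |-E| ^ (p - 2) * -E = -E ^ (p - 1) := by
  rw [abs_neg, abs_of_pos hE, mul_neg, show p - 1 = p - 2 + 1 by ring, rpow_add_one hE.ne']

lemma mul_rpow_conjExponent_sub_one {p α a s W : ℝ} (hp : 1 < p) (ha : 0 ≤ a) (hs : 0 ≤ s)
    (hW : 0 ≤ W) :
    (a * s ^ (p / (p - 1) - 1) * W ^ (α - 1)) ^ (p - 1) =
      a ^ (p - 1) * (s * W ^ ((α - 1) * (p - 1))) := by
  have hconj : (p / (p - 1) - 1) * (p - 1) = 1 := by
    field_simp [(sub_pos.2 hp).ne']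
    ring
  rw [mul_rpow (by positivity) (by positivity), mul_rpow ha (by positivity), ← rpow_mul hs,
    ← rpow_mul hW, hconj, rpow_one, mul_assoc]

lemma pLaplacianFlux_eq_of_hasDerivAt {H : ℝ → ℝ} {p α R s : ℝ} (hp : 1 < p) (hα : 0 < α)
    (hs : 0 < s) (hW : 0 < R ^ (p / (p - 1)) - s ^ (p / (p - 1)))
    (hH : HasDerivAt H (-(α * (p / (p - 1))) * s ^ (p / (p - 1) - 1) *
      (R ^ (p / (p - 1)) - s ^ (p / (p - 1))) ^ (α - 1)) s) :
    |deriv H s| ^ (p - 2) * deriv H s =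
      -((α * (p / (p - 1))) ^ (p - 1) *
        (s * (R ^ (p / (p - 1)) - s ^ (p / (p - 1))) ^ ((α - 1) * (p - 1)))) := by
  have hβ : 0 < p / (p - 1) := div_pos (by linarith) (by linarith)
  rw [hH.deriv, neg_mul, neg_mul, abs_neg_rpow_mul_neg p (by positivity),
    mul_rpow_conjExponent_sub_one hp (by positivity) hs.le hW.le]

lemma barenblatt_rhs_eq {p α β d r R W : ℝ} (hα : 0 ≤ α) (hβ : 0 < β)
    (hβp : β * (p - 1) = p) (hr : r ≠ 0) (hW : 0 < W) :
    -((α * β) ^ (p - 1) * (W ^ ((α - 1) * (p - 1)) -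
        β * ((α - 1) * (p - 1)) * (R ^ β - W) * W ^ ((α - 1) * (p - 1) - 1))) =
      (p - 1) * (α - 1) * β ^ p * α ^ (p - 1) * R ^ β * W ^ ((α - 1) * (p - 1) - 1) -
        (d + p * (α - 1)) * β ^ (p - 1) * α ^ (p - 1) * W ^ ((α - 1) * (p - 1)) -
        (d - 1) / r * -((α * β) ^ (p - 1) * (r * W ^ ((α - 1) * (p - 1)))) := by
  have hWk : W ^ ((α - 1) * (p - 1)) = W ^ ((α - 1) * (p - 1) - 1) * W := by
    rw [← rpow_add_one hW.ne']
    ring_nf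
  have hβpow : β ^ p = β ^ (p - 1) * β := by
    rw [← rpow_add_one hβ.ne']
    ring_nf
  rw [hWk, hβpow, mul_rpow hα hβ.le]
  field_simp
  linear_combination -α ^ (p - 1) * W * (α - 1) * hβp

theorem stmt16_general (d : ℕ) (p α R : ℝ) (hp : 1 < p) (hα : 1 < α)
    (H : ℝ → ℝ) (A B : ℝ)
    (hH : ∀ r ∈ Icc (0:ℝ) R, H r = (R ^ (p / (p - 1)) - r ^ (p / (p - 1))) ^ α)
    (hA : A = (p - 1) * (α - 1) * (p / (p - 1)) ^ p * α ^ (p - 1) * R ^ (p / (p - 1)))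
    (hB : B = ((d : ℝ) + p * (α - 1)) * (p / (p - 1)) ^ (p - 1) * α ^ (p - 1)) :
    ∀ r ∈ Ioo (0:ℝ) R, DifferentiableAt ℝ H r ∧
      HasDerivAt (fun s => |deriv H s| ^ (p - 2) * deriv H s)
        (A * H r ^ (((α - 1) * (p - 1) - 1) / α) - B * H r ^ ((α - 1) * (p - 1) / α)
          - (((d : ℝ) - 1) / r) * (|deriv H r| ^ (p - 2) * deriv H r)) r := by
  intro r hr
  have hβ : 0 < p / (p - 1) := div_pos (by linarith) (by linarith)
  have hW : ∀ s ∈ Ioo 0 R, 0 < R ^ (p / (p - 1)) - s ^ (p / (p - 1)) := fun s hs =>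
    rpow_sub_rpow_pos hβ hs.1.le hs.2
  have hH' : ∀ s ∈ Ioo 0 R, HasDerivAt H _ s := fun s hs =>
    (hasDerivAt_rpow_sub_rpow_rpow hs.1.ne' (hW s hs).ne').congr_of_eventuallyEq <|
      eventually_of_mem (Ioo_mem_nhds hs.1 hs.2) fun t ht => hH t (Ioo_subset_Icc_self ht)
  have hflux : (fun s => |deriv H s| ^ (p - 2) * deriv H s) =ᶠ[𝓝 r] _ :=
    eventually_of_mem (Ioo_mem_nhds hr.1 hr.2) fun s hs =>
      pLaplacianFlux_eq_of_hasDerivAt hp (by linarith) hs.1 (hW s hs) (hH' s hs)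
  refine ⟨(hH' r hr).differentiableAt, ?_⟩
  refine ((((hasDerivAt_mul_rpow_sub_rpow_rpow hr.1 (hW r hr).ne').const_mul _).neg
    ).congr_of_eventuallyEq hflux).congr_deriv ?_
  have hHr : ∀ e, H r ^ (e / α) = (R ^ (p / (p - 1)) - r ^ (p / (p - 1))) ^ e := fun e => by
    rw [hH r (Ioo_subset_Icc_self hr), ← rpow_mul (hW r hr).le, mul_div_cancel₀ _ (by linarith)]
  rw [hflux.eq_of_nhds, hHr, hHr, hA, hB]
  nth_rw 2 [show r ^ (p / (p - 1)) =
    R ^ (p / (p - 1)) - (R ^ (p / (p - 1)) - r ^ (p / (p - 1))) by ring]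
  exact barenblatt_rhs_eq (by linarith) hβ (div_mul_cancel₀ p (by linarith)) hr.1.ne' (hW r hr)

/-- The Barenblatt-type profile
`H(r) = (R^{p/(p-1)} - r^{p/(p-1)})^α` satisfies
`Δ_p H = A H^{((α-1)(p-1)-1)/α} - B H^{((α-1)(p-1))/α}` in radial form on `(0,R)`. -/
theorem stmt16 (d : ℕ) (hd : 1 ≤ d) (p α R : ℝ) (hp : 1 < p) (hα : 1 < α) (hR : 0 < R)
    (H : ℝ → ℝ) (A B : ℝ)
    (hH : ∀ r ∈ Icc (0:ℝ) R, H r = (R ^ (p / (p - 1)) - r ^ (p / (p - 1))) ^ α)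
    (hA : A = (p - 1) * (α - 1) * (p / (p - 1)) ^ p * α ^ (p - 1) * R ^ (p / (p - 1)))
    (hB : B = ((d : ℝ) + p * (α - 1)) * (p / (p - 1)) ^ (p - 1) * α ^ (p - 1)) :
    ∀ r ∈ Ioo (0:ℝ) R, DifferentiableAt ℝ H r ∧
      HasDerivAt (fun s => |deriv H s| ^ (p - 2) * deriv H s)
        (A * H r ^ (((α - 1) * (p - 1) - 1) / α) - B * H r ^ ((α - 1) * (p - 1) / α)
          - (((d : ℝ) - 1) / r) * (|deriv H r| ^ (p - 2) * deriv H r)) r :=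
  stmt16_general d p α R hp hα H A B hH hA hB
end

section
/- Let d ≥ 1 be an integer and p, q real numbers with p > 1, q > p−1 and pq > d(q+1−p). Set m = (p(q−1)+1)/(p−1), α = (p−1)/(q+1−p), K = ((pq − d(q+1−p))/(q+1−p))^{1/(q+1−p)} · (p/(q+1−p))^{(p−1)/(q+1−p)}, L = q^{−1} ((pq − d(q+1−p))/(q+1−p))^{p/(p−1)}, and define u(r) = K (L + r^{p/(p−1)})^{−α} for r ≥ 0. Then u is continuously differentiable on [0,∞) with u'(0) = 0, u(r) → 0 and u'(r) → 0 as r → ∞, and for every r > 0 the function s ↦ |u'(s)|^{p−2}u'(s) is differentiable at r with (|u'|^{p−2}u')'(r) + ((d−1)/r)|u'(r)|^{p−2}u'(r) = u(r)^q − u(r)^m. -/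
/-!
With `β = p/(p-1)` and `X = L + r^β`, the profile `u = K X^{-α}` has
`u' = -Kαβ r^{β-1} X^{-α-1} < 0`. Since `(β-1)(p-1) = 1` and `(α+1)(p-1) = αq`, the flux
collapses to `|u'|^{p-2} u' = -A r X^{-αq}` with `A = (Kαβ)^{p-1}`; differentiating it and
substituting `r^β = X - L` gives
`(|u'|^{p-2} u')' + (d-1)/r |u'|^{p-2} u' = A (αqβ - d) X^{-αq} - A αqβ L X^{-αq-1}`,
while `u^q = K^q X^{-αq}` and, as `αm = αq + 1`, `u^m = K^m X^{-αq-1}`.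
The two coefficients agree because, writing `σ = q+1-p`, `c = (pq - dσ)/σ` and `w = p/σ`,
the constants are chosen so that `K^σ = c w^{p-1}` and `L = c^{p/(p-1)}/q`.
-/

open Filter Set Topology

namespace LaneEmden

noncomputable def bubble (K L β α r : ℝ) : ℝ := K * (L + r ^ β) ^ (-α)

noncomputable def bubbleDeriv (K L β α r : ℝ) : ℝ :=
  -(K * α * β) * (r ^ (β - 1) * (L + r ^ β) ^ (-α - 1))

theorem abs_rpow_sub_two_mul_of_neg {v : ℝ} (hv : v < 0) (p : ℝ) :
    |v| ^ (p - 2) * v = -(-v) ^ (p - 1) := by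
  rw [abs_of_neg hv, show p - 1 = p - 2 + 1 by ring, Real.rpow_add_one (neg_ne_zero.2 hv.ne)]
  ring

theorem hasDerivAt_explicit_flux {A L β γ r : ℝ} (n : ℝ) (hr : 0 < r) (hX : 0 < L + r ^ β) :
    HasDerivAt (fun s => -A * (s * (L + s ^ β) ^ (-γ)))
      (A * (γ * β - n) * (L + r ^ β) ^ (-γ) - A * γ * β * L * (L + r ^ β) ^ (-γ - 1)
        - ((n - 1) / r) * (-A * (r * (L + r ^ β) ^ (-γ)))) r := by
  have hinner := ((Real.hasDerivAt_rpow_const (p := β) (Or.inl hr.ne')).const_add L).rpow_const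
    (p := -γ) (Or.inl hX.ne')
  refine (((hasDerivAt_id r).mul hinner).const_mul (-A)).congr_deriv ?_
  have hrβ : r * r ^ (β - 1) = r ^ β := by
    rw [mul_comm, ← Real.rpow_add_one hr.ne', sub_add_cancel]
  have hXγ : (L + r ^ β) * (L + r ^ β) ^ (-γ - 1) = (L + r ^ β) ^ (-γ) := by
    rw [mul_comm, ← Real.rpow_add_one hX.ne', sub_add_cancel]
  simp only [id]
  field_simp
  linear_combination (A * γ * β * (L + r ^ β) ^ (-γ - 1)) * hrβ + (A * γ * β) * hXγ

section Profile

variable {K L β α : ℝ}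

theorem hasDerivAt_bubble (hL : 0 < L) (hβ : 1 ≤ β) {r : ℝ} (hr : 0 ≤ r) :
    HasDerivAt (bubble K L β α) (bubbleDeriv K L β α r) r := by
  have hX : L + r ^ β ≠ 0 := by positivity
  refine ((((Real.hasDerivAt_rpow_const (Or.inr hβ)).const_add L).rpow_const
    (p := -α) (Or.inl hX)).const_mul K).congr_deriv ?_
  rw [bubbleDeriv]
  ring

theorem continuousOn_bubbleDeriv (hL : 0 < L) (hβ : 1 ≤ β) :
    ContinuousOn (bubbleDeriv K L β α) (Ici 0) := by
  have hX (r : ℝ) (hr : r ∈ Ici (0 : ℝ)) : L + r ^ β ≠ 0 := by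
    have : (0 : ℝ) ≤ r := hr
    positivity
  have hbase : ContinuousOn (fun r : ℝ => L + r ^ β) (Ici 0) :=
    continuousOn_const.add (continuousOn_id.rpow_const fun _ _ => Or.inr (by linarith))
  exact continuousOn_const.mul
    ((continuousOn_id.rpow_const fun _ _ => Or.inr (by linarith)).mul
      (hbase.rpow_const fun r hr => Or.inl (hX r hr)))

theorem bubbleDeriv_zero (hβ : 1 < β) : bubbleDeriv K L β α 0 = 0 := by
  simp [bubbleDeriv, Real.zero_rpow (sub_ne_zero.2 hβ.ne')]

theorem tendsto_bubble_atTop (hβ : 0 < β) (hα : 0 < α) :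
    Tendsto (bubble K L β α) atTop (𝓝 0) := by
  have := ((tendsto_rpow_neg_atTop hα).comp
    (tendsto_atTop_add_const_left atTop L (tendsto_rpow_atTop hβ))).const_mul K
  rwa [mul_zero] at this

theorem tendsto_bubbleDeriv_atTop (hL : 0 ≤ L) (hβ : 0 < β) (hα : 0 < α) :
    Tendsto (bubbleDeriv K L β α) atTop (𝓝 0) := by
  have hbound : Tendsto (fun r : ℝ => r ^ (-(1 + β * α))) atTop (𝓝 0) :=
    tendsto_rpow_neg_atTop (by positivity)
  have hsq : Tendsto (fun r : ℝ => r ^ (β - 1) * (L + r ^ β) ^ (-α - 1)) atTop (𝓝 0) := by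
    refine squeeze_zero' ?_ ?_ hbound
    · filter_upwards [eventually_ge_atTop (0 : ℝ)] with r hr
      positivity
    · filter_upwards [eventually_gt_atTop (0 : ℝ)] with r hr
      calc r ^ (β - 1) * (L + r ^ β) ^ (-α - 1)
          ≤ r ^ (β - 1) * (r ^ β) ^ (-α - 1) := by
            refine mul_le_mul_of_nonneg_left ?_ (by positivity)
            exact Real.rpow_le_rpow_of_nonpos (by positivity) (by linarith) (by linarith)
        _ = r ^ (-(1 + β * α)) := by
            rw [← Real.rpow_mul hr.le, ← Real.rpow_add hr]
            ring_nf
  have := hsq.const_mul (-(K * α * β))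
  rwa [mul_zero] at this

theorem abs_bubbleDeriv_rpow_mul {p : ℝ} (hK : 0 < K) (hL : 0 ≤ L) (hα : 0 < α) (hβ : 0 < β)
    (hβp : (β - 1) * (p - 1) = 1) {s : ℝ} (hs : 0 < s) :
    |bubbleDeriv K L β α s| ^ (p - 2) * bubbleDeriv K L β α s =
      -(K * α * β) ^ (p - 1) * (s * (L + s ^ β) ^ (-((α + 1) * (p - 1)))) := by
  have hX : 0 < L + s ^ β := by positivity
  have hneg : bubbleDeriv K L β α s < 0 := by
    rw [bubbleDeriv, neg_mul]
    exact neg_neg_of_pos (by positivity)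
  rw [abs_rpow_sub_two_mul_of_neg hneg, bubbleDeriv, neg_mul, neg_neg,
    Real.mul_rpow (by positivity) (by positivity),
    Real.mul_rpow (x := s ^ (β - 1)) (by positivity) (by positivity),
    ← Real.rpow_mul hs.le, ← Real.rpow_mul hX.le, hβp, Real.rpow_one,
    show (-α - 1) * (p - 1) = -((α + 1) * (p - 1)) by ring]
  ring

theorem hasDerivAt_flux_bubbleDeriv {p q m n : ℝ} (hK : 0 < K) (hL : 0 < L) (hα : 0 < α)
    (hβ : 0 < β) (hβp : (β - 1) * (p - 1) = 1) (hαq : α * q = (α + 1) * (p - 1))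
    (hαm : α * m = (α + 1) * (p - 1) + 1)
    (hKq : (K * α * β) ^ (p - 1) * ((α + 1) * (p - 1) * β - n) = K ^ q)
    (hKm : (K * α * β) ^ (p - 1) * ((α + 1) * (p - 1)) * β * L = K ^ m) {r : ℝ} (hr : 0 < r) :
    HasDerivAt (fun s => |bubbleDeriv K L β α s| ^ (p - 2) * bubbleDeriv K L β α s)
      (bubble K L β α r ^ q - bubble K L β α r ^ m -
        ((n - 1) / r) * (|bubbleDeriv K L β α r| ^ (p - 2) * bubbleDeriv K L β α r)) r := by
  have hX : 0 < L + r ^ β := by positivity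
  have hflux : (fun s => |bubbleDeriv K L β α s| ^ (p - 2) * bubbleDeriv K L β α s) =ᶠ[𝓝 r]
      fun s => -(K * α * β) ^ (p - 1) * (s * (L + s ^ β) ^ (-((α + 1) * (p - 1)))) := by
    filter_upwards [Ioi_mem_nhds hr] with s hs
    exact abs_bubbleDeriv_rpow_mul hK hL.le hα hβ hβp hs
  have hpow (e : ℝ) : bubble K L β α r ^ e = K ^ e * (L + r ^ β) ^ (-(α * e)) := by
    rw [bubble, Real.mul_rpow hK.le (by positivity), ← Real.rpow_mul hX.le, neg_mul]
  refine ((hasDerivAt_explicit_flux n hr hX).congr_of_eventuallyEq hflux).congr_deriv ?_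
  rw [abs_bubbleDeriv_rpow_mul hK hL.le hα hβ hβp hr, hpow, hpow, hαq, hαm, ← hKq, ← hKm,
    neg_add']

end Profile

section Coefficients

variable {K c w σ p : ℝ}

theorem rpow_sub_one_add_eq_of_rpow_eq (hK : 0 < K) (hw : 0 < w)
    (hKσ : K ^ σ = c * w ^ (p - 1)) :
    K ^ (p - 1 + σ) = (K * w) ^ (p - 1) * c := by
  rw [Real.mul_rpow hK.le hw.le, Real.rpow_add hK, hKσ]
  ring

theorem rpow_sub_one_add_add_div_eq_of_rpow_eq (hK : 0 < K) (hc : 0 < c) (hw : 0 < w)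
    (hp : p ≠ 1) (hKσ : K ^ σ = c * w ^ (p - 1)) :
    K ^ (p - 1 + σ + σ / (p - 1)) = (K * w) ^ (p - 1) * w * c ^ (p / (p - 1)) := by
  have hp1 : p - 1 ≠ 0 := sub_ne_zero.2 hp
  have hKσ' : K ^ (σ / (p - 1)) = c ^ (p - 1)⁻¹ * w := by
    rw [div_eq_mul_inv, Real.rpow_mul hK.le, hKσ, Real.mul_rpow hc.le (by positivity),
      ← Real.rpow_mul hw.le, mul_inv_cancel₀ hp1, Real.rpow_one]
  rw [Real.rpow_add hK, rpow_sub_one_add_eq_of_rpow_eq hK hw hKσ, hKσ',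
    show p / (p - 1) = 1 + (p - 1)⁻¹ by field_simp; ring, Real.rpow_add hc, Real.rpow_one]
  ring

end Coefficients

section Constants

variable {d p q m α K L : ℝ}

theorem bubble_constants_pos (hp : 1 < p) (hq : p - 1 < q) (hpq : d * (q + 1 - p) < p * q)
    (hK : K = ((p * q - d * (q + 1 - p)) / (q + 1 - p)) ^ (1 / (q + 1 - p)) *
      (p / (q + 1 - p)) ^ ((p - 1) / (q + 1 - p)))
    (hL : L = q⁻¹ * ((p * q - d * (q + 1 - p)) / (q + 1 - p)) ^ (p / (p - 1))) :
    0 < K ∧ 0 < L := by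
  have hσ : 0 < q + 1 - p := by linarith
  have hc : 0 < (p * q - d * (q + 1 - p)) / (q + 1 - p) := div_pos (by linarith) hσ
  have hw : 0 < p / (q + 1 - p) := div_pos (by linarith) hσ
  have hq0 : 0 < q := by linarith
  exact ⟨hK ▸ by positivity, hL ▸ by positivity⟩

theorem bubble_coefficients (hp : 1 < p) (hq : p - 1 < q) (hpq : d * (q + 1 - p) < p * q)
    (hm : m = (p * (q - 1) + 1) / (p - 1)) (hα : α = (p - 1) / (q + 1 - p))
    (hK : K = ((p * q - d * (q + 1 - p)) / (q + 1 - p)) ^ (1 / (q + 1 - p)) *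
      (p / (q + 1 - p)) ^ ((p - 1) / (q + 1 - p)))
    (hL : L = q⁻¹ * ((p * q - d * (q + 1 - p)) / (q + 1 - p)) ^ (p / (p - 1))) :
    (K * α * (p / (p - 1))) ^ (p - 1) * ((α + 1) * (p - 1) * (p / (p - 1)) - d) = K ^ q ∧
      (K * α * (p / (p - 1))) ^ (p - 1) * ((α + 1) * (p - 1)) * (p / (p - 1)) * L = K ^ m := by
  obtain ⟨hK0, -⟩ := bubble_constants_pos hp hq hpq hK hL
  set σ := q + 1 - p
  set c := (p * q - d * σ) / σ with hc_def
  set w := p / σ with hw_def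
  have hσ : 0 < σ := by linarith
  have hc : 0 < c := div_pos (by linarith) hσ
  have hw : 0 < w := div_pos (by linarith) hσ
  have hp1 : p - 1 ≠ 0 := by linarith
  have hq0 : q ≠ 0 := by linarith
  have hσ0 : σ ≠ 0 := hσ.ne'
  have hKσ : K ^ σ = c * w ^ (p - 1) := by
    rw [hK, Real.mul_rpow (by positivity) (by positivity), ← Real.rpow_mul hc.le,
      ← Real.rpow_mul hw.le, one_div_mul_cancel hσ0, div_mul_cancel₀ _ hσ0, Real.rpow_one]
  have hKw : K * α * (p / (p - 1)) = K * w := by rw [hα, hw_def]; field_simp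
  have hq' : q = p - 1 + σ := by ring
  have hm' : m = p - 1 + σ + σ / (p - 1) := by rw [hm]; field_simp; ring
  constructor
  · rw [hKw, hq', rpow_sub_one_add_eq_of_rpow_eq hK0 hw hKσ]
    congr 1
    rw [hα, hc_def, hq']
    field_simp
  · rw [hKw, hm', rpow_sub_one_add_add_div_eq_of_rpow_eq hK0 hc hw (by linarith) hKσ, hL]
    field_simp
    rw [hα, hw_def, hq']
    field_simp

end Constants

end LaneEmden

open LaneEmden

theorem stmt17_general (d : ℕ) (p q : ℝ) (hp : 1 < p) (hq : p - 1 < q)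
    (hpq : (d : ℝ) * (q + 1 - p) < p * q)
    (m α K L : ℝ)
    (hm : m = (p * (q - 1) + 1) / (p - 1))
    (hα : α = (p - 1) / (q + 1 - p))
    (hK : K = ((p * q - (d : ℝ) * (q + 1 - p)) / (q + 1 - p)) ^ (1 / (q + 1 - p)) *
      (p / (q + 1 - p)) ^ ((p - 1) / (q + 1 - p)))
    (hL : L = q⁻¹ * ((p * q - (d : ℝ) * (q + 1 - p)) / (q + 1 - p)) ^ (p / (p - 1)))
    (u : ℝ → ℝ)
    (hu : ∀ r : ℝ, 0 ≤ r → u r = K * (L + r ^ (p / (p - 1))) ^ (-α)) :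
    ∃ u' : ℝ → ℝ,
      (∀ r ∈ Ici (0:ℝ), HasDerivWithinAt u (u' r) (Ici 0) r) ∧
      ContinuousOn u' (Ici 0) ∧
      u' 0 = 0 ∧
      Tendsto u atTop (𝓝 0) ∧
      Tendsto u' atTop (𝓝 0) ∧
      ∀ r ∈ Ioi (0:ℝ),
        HasDerivAt (fun s => |u' s| ^ (p - 2) * u' s)
          (u r ^ q - u r ^ m - (((d : ℝ) - 1) / r) * (|u' r| ^ (p - 2) * u' r)) r := by
  obtain ⟨hK0, hL0⟩ := bubble_constants_pos hp hq hpq hK hL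
  obtain ⟨hKq, hKm⟩ := bubble_coefficients hp hq hpq hm hα hK hL
  have hp1 : p - 1 ≠ 0 := by linarith
  have hσ : q + 1 - p ≠ 0 := by linarith
  have hα0 : 0 < α := hα ▸ div_pos (by linarith) (by linarith)
  have hβ : 1 < p / (p - 1) := (one_lt_div (by linarith)).2 (by linarith)
  have hβp : (p / (p - 1) - 1) * (p - 1) = 1 := by field_simp; ring
  have hαq : α * q = (α + 1) * (p - 1) := by rw [hα]; field_simp; ring
  have hαm : α * m = (α + 1) * (p - 1) + 1 := by rw [hα, hm]; field_simp; ring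
  have hu_ev : bubble K L (p / (p - 1)) α =ᶠ[atTop] u := by
    filter_upwards [eventually_ge_atTop 0] with r hr using (hu r hr).symm
  refine ⟨bubbleDeriv K L (p / (p - 1)) α,
    fun r hr => (hasDerivAt_bubble hL0 hβ.le hr).hasDerivWithinAt.congr hu (hu r hr),
    continuousOn_bubbleDeriv hL0 hβ.le, bubbleDeriv_zero hβ,
    (tendsto_bubble_atTop (by linarith) hα0).congr' hu_ev,
    tendsto_bubbleDeriv_atTop hL0.le (by linarith) hα0, fun r hr => ?_⟩
  rw [hu r (le_of_lt hr)]
  exact hasDerivAt_flux_bubbleDeriv hK0 hL0 hα0 (by linarith) hβp hαq hαm hKq hKm hr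

/-- The explicit positive profile `u(r) = K (L + r^{p/(p-1)})^{-α}`
is a closed-form solution of the radial generalized Lane-Emden equation
`Δ_p u + u^m = u^q` on `(0,∞)` with `u'(0) = 0` and `u, u' → 0` at infinity,
for the exponent relation `m = (p(q-1)+1)/(p-1)`. -/
theorem stmt17 (d : ℕ) (hd : 1 ≤ d) (p q : ℝ) (hp : 1 < p) (hq : p - 1 < q)
    (hpq : (d : ℝ) * (q + 1 - p) < p * q)
    (m α K L : ℝ)
    (hm : m = (p * (q - 1) + 1) / (p - 1))
    (hα : α = (p - 1) / (q + 1 - p))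
    (hK : K = ((p * q - (d : ℝ) * (q + 1 - p)) / (q + 1 - p)) ^ (1 / (q + 1 - p)) *
      (p / (q + 1 - p)) ^ ((p - 1) / (q + 1 - p)))
    (hL : L = q⁻¹ * ((p * q - (d : ℝ) * (q + 1 - p)) / (q + 1 - p)) ^ (p / (p - 1)))
    (u : ℝ → ℝ)
    (hu : ∀ r : ℝ, 0 ≤ r → u r = K * (L + r ^ (p / (p - 1))) ^ (-α)) :
    ∃ u' : ℝ → ℝ,
      (∀ r ∈ Ici (0:ℝ), HasDerivWithinAt u (u' r) (Ici 0) r) ∧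
      ContinuousOn u' (Ici 0) ∧
      u' 0 = 0 ∧
      Tendsto u atTop (𝓝 0) ∧
      Tendsto u' atTop (𝓝 0) ∧
      ∀ r ∈ Ioi (0:ℝ),
        HasDerivAt (fun s => |u' s| ^ (p - 2) * u' s)
          (u r ^ q - u r ^ m - (((d : ℝ) - 1) / r) * (|u' r| ^ (p - 2) * u' r)) r :=
  stmt17_general d p q hp hq hpq m α K L hm hα hK hL u hu
end

section
/- Let p > 1 and q ≥ 0 be real numbers. For each real m > q set η₁(m) = (p−1)(m+1)+p, η₂ = (p−1)(q+1)+p, ℓ(m) = (m−q)/((m+1)η₂), 𝓑(a,b) = ∫_0^1 t^{a−1}(1−t)^{b−1} dt, and C(m) = [ 2^p (p−1)^{1−p} η₁(m)^{η₁(m)/(m−q)} (m−q)^{1−2p} η₂^{−η₂/(m−q)} 𝓑(η₂/(p(m−q)), (2p−1)/p)^p ]^{−ℓ(m)}. Then lim_{m→∞} C(m) = ((p + (p−1)(q+1))/(2p))^{p/(p + (p−1)(q+1))}. -/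
/-!
Write `u = m - q` and `a = η₂ / (p u)`. Since `η₁(m) = (p - 1) u + η₂`, the bracket in `C(m)`
regroups as
`2^p (p-1)^(1-p) · η₂^(-η₂/u) · (η₁/u)^(p-1) · η₁^(η₂/u) · (p/η₂)^p · (a 𝓑(a, b))^p`.
As `m → ∞`: `η₁/u → p - 1`; `η₂^(-η₂/u) → 1`; `η₁^(η₂/u) → 1` because `log η₁ = o(u)`; and
`a 𝓑(a, b) = Γ(a + 1) Γ(b) / Γ(a + b) → 1` because `a → 0⁺`. So the bracket tends to `(2p/η₂)^p`,
while the exponent `-ℓ(m)` tends to `-1/η₂`.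
-/

open Filter Set Topology MeasureTheory Real ProbabilityTheory

lemma integral_Ioo_rpow_mul_one_sub_rpow_eq_beta {a b : ℝ} (ha : 0 < a) (hb : 0 < b) :
    ∫ t in Ioo (0:ℝ) 1, t ^ (a - 1) * (1 - t) ^ (b - 1) = beta a b := by
  have hcomplex : Complex.betaIntegral a b
      = ((∫ t in Ioo (0:ℝ) 1, t ^ (a - 1) * (1 - t) ^ (b - 1) : ℝ) : ℂ) := by
    rw [Complex.betaIntegral, intervalIntegral.integral_of_le zero_le_one,
      ← integral_Ioc_eq_integral_Ioo, ← integral_complex_ofReal]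
    refine setIntegral_congr_fun measurableSet_Ioc fun t ht => ?_
    rw [Complex.ofReal_mul, Complex.ofReal_cpow ht.1.le,
      Complex.ofReal_cpow (by linarith [ht.2] : (0:ℝ) ≤ 1 - t)]
    push_cast
    ring
  rw [beta_eq_betaIntegralReal a b ha hb, hcomplex, Complex.ofReal_re]

lemma Real.continuousAt_Gamma_of_pos {s : ℝ} (hs : 0 < s) : ContinuousAt Gamma s :=
  (differentiableAt_Gamma fun n hn => by linarith [n.cast_nonneg (α := ℝ)]).continuousAt

lemma tendsto_mul_beta_nhdsGT_zero {b : ℝ} (hb : 0 < b) :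
    Tendsto (fun a => a * beta a b) (𝓝[>] 0) (𝓝 1) := by
  have hcont : ContinuousAt (fun a => Gamma (a + 1) * Gamma b / Gamma (a + b)) 0 := by
    refine ((continuousAt_Gamma_of_pos ?_).comp (continuousAt_id.add continuousAt_const)).mul
      continuousAt_const |>.div
      ((continuousAt_Gamma_of_pos ?_).comp (continuousAt_id.add continuousAt_const)) ?_
    all_goals simp [hb, (Gamma_pos_of_pos hb).ne']
  have hΓ := hcont.tendsto.mono_left (nhdsWithin_le_nhds (s := Ioi 0))
  simp only [zero_add, Gamma_one, one_mul, div_self (Gamma_pos_of_pos hb).ne'] at hΓ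
  refine hΓ.congr' ?_
  filter_upwards [self_mem_nhdsWithin] with a (ha : 0 < a)
  rw [beta, Gamma_add_one ha.ne']
  ring

lemma tendsto_mul_add_div_add_atTop (c d e : ℝ) :
    Tendsto (fun x : ℝ => (c * x + d) / (x + e)) atTop (𝓝 c) := by
  have hx : Tendsto (fun x : ℝ => x + e) atTop atTop := tendsto_atTop_add_const_right _ e tendsto_id
  have h := (tendsto_const_nhds (x := d - c * e)).div_atTop hx |>.const_add c
  rw [add_zero] at h
  refine h.congr' ?_
  filter_upwards [hx.eventually_gt_atTop 0] with x hx
  field_simp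
  ring

lemma tendsto_mul_add_rpow_div_atTop {c : ℝ} (hc : 0 < c) (d e : ℝ) :
    Tendsto (fun x : ℝ => (c * x + d) ^ (e / x)) atTop (𝓝 1) := by
  have hy : Tendsto (fun x : ℝ => c * x + d) atTop atTop :=
    tendsto_atTop_add_const_right _ d (tendsto_id.const_mul_atTop hc)
  refine ((tendsto_rpow_div_mul_add (e * c) 1 (-d) one_ne_zero.symm).comp hy).congr' ?_
  filter_upwards [eventually_gt_atTop 0] with x hx
  simp only [Function.comp_apply]
  congr 1
  field_simp
  ring

lemma rpow_div_mul_rpow_one_sub_two_mul_mul_rpow_eq {u A E D p : ℝ} (hu : 0 < u) (hA : 0 < A)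
    (hE : 0 < E) (hD : 0 ≤ D) (hp : 0 < p) (hAE : A = (p - 1) * u + E) :
    A ^ (A / u) * u ^ (1 - 2 * p) * D ^ p
      = (A / u) ^ (p - 1) * A ^ (E / u) * (p / E) ^ p * (E / (p * u) * D) ^ p := by
  have hAu : A ^ (A / u) = A ^ (p - 1) * A ^ (E / u) := by
    rw [← rpow_add hA, hAE]
    field_simp
  have hu' : u ^ (1 - 2 * p) = (u ^ (p - 1))⁻¹ * (u ^ p)⁻¹ := by
    rw [← rpow_neg hu.le, ← rpow_neg hu.le, ← rpow_add hu]
    ring_nf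
  rw [hAu, hu', div_rpow hA.le hu.le, div_rpow hp.le hE.le, mul_rpow (by positivity) hD,
    div_rpow hE.le (by positivity), mul_rpow hp.le hu.le]
  field_simp

/-- The bracket `[⋯]` in `C(m) = [⋯] ^ (-ℓ(m))`. -/
noncomputable def gnBracket (p q m : ℝ) : ℝ :=
  (2:ℝ) ^ p * (p - 1) ^ (1 - p) *
    ((p - 1) * (m + 1) + p) ^ (((p - 1) * (m + 1) + p) / (m - q)) *
    (m - q) ^ (1 - 2 * p) *
    ((p - 1) * (q + 1) + p) ^ (-(((p - 1) * (q + 1) + p) / (m - q))) *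
    (∫ t in Ioo (0:ℝ) 1,
      t ^ (((p - 1) * (q + 1) + p) / (p * (m - q)) - 1) *
        (1 - t) ^ ((2 * p - 1) / p - 1)) ^ p

section
variable {p q m : ℝ}

lemma gnBracket_eq (hp : 1 < p) (hq : 0 ≤ q) (hm : q < m) :
    gnBracket p q m = 2 ^ p * (p - 1) ^ (1 - p) *
      ((p - 1) * (q + 1) + p) ^ (-(((p - 1) * (q + 1) + p) / (m - q))) *
      ((((p - 1) * (m + 1) + p) / (m - q)) ^ (p - 1) *
        ((p - 1) * (m + 1) + p) ^ (((p - 1) * (q + 1) + p) / (m - q)) *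
        (p / ((p - 1) * (q + 1) + p)) ^ p *
        (((p - 1) * (q + 1) + p) / (p * (m - q)) *
          beta (((p - 1) * (q + 1) + p) / (p * (m - q))) ((2 * p - 1) / p)) ^ p) := by
  have hu : 0 < m - q := sub_pos.2 hm
  have hA : 0 < (p - 1) * (m + 1) + p := by nlinarith
  have hE : 0 < (p - 1) * (q + 1) + p := by nlinarith
  have ha : 0 < ((p - 1) * (q + 1) + p) / (p * (m - q)) := by positivity
  have hb : 0 < (2 * p - 1) / p := div_pos (by linarith) (by linarith)
  rw [gnBracket, integral_Ioo_rpow_mul_one_sub_rpow_eq_beta ha hb,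
    ← rpow_div_mul_rpow_one_sub_two_mul_mul_rpow_eq hu hA hE (beta_pos ha hb).le (by linarith)
      (by ring)]
  ring

lemma tendsto_gnBracket (hp : 1 < p) (hq : 0 ≤ q) :
    Tendsto (gnBracket p q) atTop (𝓝 ((2 * p / ((p - 1) * (q + 1) + p)) ^ p)) := by
  set E := (p - 1) * (q + 1) + p with hE_def
  have hE : 0 < E := by nlinarith
  have hp1 : 0 < p - 1 := by linarith
  have hu : Tendsto (fun m : ℝ => m - q) atTop atTop := tendsto_atTop_add_const_right _ _ tendsto_id
  have hE_u : Tendsto (fun m : ℝ => E / (m - q)) atTop (𝓝 0) := tendsto_const_nhds.div_atTop hu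
  have hE_pow : Tendsto (fun m : ℝ => E ^ (-(E / (m - q)))) atTop (𝓝 1) := by
    simpa using tendsto_const_nhds.rpow hE_u.neg (Or.inl hE.ne')
  have hA_u : Tendsto (fun m : ℝ => ((p - 1) * (m + 1) + p) / (m - q)) atTop (𝓝 (p - 1)) :=
    (tendsto_mul_add_div_add_atTop (p - 1) (2 * p - 1) (-q)).congr fun m => by ring_nf
  have hA_pow : Tendsto (fun m : ℝ => ((p - 1) * (m + 1) + p) ^ (E / (m - q))) atTop (𝓝 1) :=
    ((tendsto_mul_add_rpow_div_atTop hp1 E E).comp hu).congr fun m => by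
      simp only [Function.comp_apply, hE_def]; ring_nf
  have hbeta : Tendsto
      (fun m : ℝ => E / (p * (m - q)) * beta (E / (p * (m - q))) ((2 * p - 1) / p)) atTop
      (𝓝 1) := by
    refine (tendsto_mul_beta_nhdsGT_zero (div_pos (by linarith) (by linarith))).comp ?_
    refine tendsto_nhdsWithin_iff.2 ⟨tendsto_const_nhds.div_atTop (hu.const_mul_atTop ?_), ?_⟩
    · linarith
    filter_upwards [eventually_gt_atTop q] with m hm
    exact div_pos hE (mul_pos (by linarith) (sub_pos.2 hm))
  have hlimit : (2:ℝ) ^ p * (p - 1) ^ (1 - p) * 1 * ((p - 1) ^ (p - 1) * 1 * (p / E) ^ p * 1 ^ p)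
      = (2 * p / E) ^ p := by
    have hcancel : (p - 1) ^ (1 - p) * (p - 1) ^ (p - 1) = 1 := by
      rw [← rpow_add hp1]; simp
    rw [one_rpow, mul_div_assoc, mul_rpow zero_le_two (by positivity)]
    linear_combination (2 ^ p * (p / E) ^ p) * hcancel
  rw [← hlimit]
  refine Tendsto.congr' ?_ ((tendsto_const_nhds.mul hE_pow).mul
    ((((hA_u.rpow_const (Or.inl hp1.ne')).mul hA_pow).mul tendsto_const_nhds).mul
      (hbeta.rpow_const (Or.inl one_ne_zero))))
  filter_upwards [eventually_gt_atTop q] with m hm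
  exact (gnBracket_eq hp hq hm).symm

end

/-- The explicit best constants `C(m)` of the one-dimensional
L^m-type Gagliardo-Nirenberg inequality converge, as `m → ∞`, to the best
constant of the one-dimensional L^∞-type Gagliardo-Nirenberg inequality. -/
theorem stmt18 (p q : ℝ) (hp : 1 < p) (hq : 0 ≤ q) :
    Tendsto (fun m : ℝ =>
      ((2:ℝ) ^ p * (p - 1) ^ (1 - p) *
        ((p - 1) * (m + 1) + p) ^ (((p - 1) * (m + 1) + p) / (m - q)) *
        (m - q) ^ (1 - 2 * p) *
        ((p - 1) * (q + 1) + p) ^ (-(((p - 1) * (q + 1) + p) / (m - q))) *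
        (∫ t in Ioo (0:ℝ) 1,
          t ^ (((p - 1) * (q + 1) + p) / (p * (m - q)) - 1) *
            (1 - t) ^ ((2 * p - 1) / p - 1)) ^ p) ^
        (-((m - q) / ((m + 1) * ((p - 1) * (q + 1) + p)))))
      atTop
      (𝓝 (((p + (p - 1) * (q + 1)) / (2 * p)) ^ (p / (p + (p - 1) * (q + 1))))) := by
  have hE : 0 < (p - 1) * (q + 1) + p := by nlinarith
  have hbase : 0 < 2 * p / ((p - 1) * (q + 1) + p) := by positivity
  have hexp : Tendsto (fun m : ℝ => -((m - q) / ((m + 1) * ((p - 1) * (q + 1) + p)))) atTop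
      (𝓝 (-(1 / ((p - 1) * (q + 1) + p)))) :=
    ((tendsto_mul_add_div_add_atTop 1 (-q) 1).div_const _).neg.congr fun m => by
      rw [div_div, one_mul, ← sub_eq_add_neg]
  have hlimit : ((p + (p - 1) * (q + 1)) / (2 * p)) ^ (p / (p + (p - 1) * (q + 1)))
      = ((2 * p / ((p - 1) * (q + 1) + p)) ^ p) ^ (-(1 / ((p - 1) * (q + 1) + p))) := by
    rw [← rpow_mul hbase.le, mul_neg, mul_one_div, rpow_neg hbase.le, ← inv_rpow hbase.le, inv_div,
      add_comm p]
  rw [hlimit]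
  exact (tendsto_gnBracket hp hq).rpow hexp (Or.inl (rpow_pos_of_pos hbase p).ne')
end

section
/- Let d ≥ 2 be an integer, p > 1 and q ≥ 0 real numbers, and set ν = (q+1)(p−1)/p + 1. There exists a constant C > 0, depending only on d, p and q, such that for every continuously differentiable function u : ℝ^d → ℝ of the form u(x) = f(‖x‖) with f : [0,∞) → [0,∞) nonincreasing, satisfying ∫_{ℝ^d} |u|^{q+1} dx < ∞ and ∫_{ℝ^d} ‖∇u(x)‖^p dx < ∞, and for every x ∈ ℝ^d with x ≠ 0, one has u(x) ≤ C · ‖x‖^{(1−d)/ν} · (∫_{ℝ^d} |u|^{q+1} dx)^{(ν−1)/(ν(q+1))} · (∫_{ℝ^d} ‖∇u(x)‖^p dx)^{1/(ν p)}. -/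
/-!
Put `F s = u (s • v)` for a unit vector `v`, so that `u x = F ‖x‖`. For `r ≤ R`, the
fundamental theorem of calculus for `F ^ ν`, together with `r ^ (d-1) ≤ s ^ (d-1)`, gives
`(F r ^ ν - F R ^ ν) r ^ (d-1) ≤ ν ∫_r^R s ^ (d-1) F ^ (ν-1) |F'|`, and Hölder's inequality with
the exponents `p' = p / (p - 1)` and `p` bounds this by `ν` times the radial integrals of
`F ^ (q+1)` and `|F'| ^ p` to the powers `1 / p'` and `1 / p`: the exponent `ν` is exactly the one
with `(ν - 1) p' = q + 1`. In polar coordinates these radial integrals are at most the two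
integrals of the statement divided by `d |B₁|`, because `|F' ‖y‖| ≤ ‖∇u y‖`. Since `F` is
nonincreasing and `F ^ (q+1)` is integrable, `F R → 0`; letting `R → ∞` and taking `ν`-th roots
gives the bound.
-/

open Filter Set Topology MeasureTheory Metric

theorem Continuous.memLp_restrict_Ioc {g : ℝ → ℝ} (hg : Continuous g) (a b : ℝ) (e : ENNReal) :
    MemLp g e (volume.restrict (Ioc a b)) := by
  obtain ⟨M, hM⟩ := isCompact_Icc.exists_bound_of_continuousOn (hg.continuousOn (s := Icc a b))
  refine MemLp.of_bound hg.aestronglyMeasurable.restrict M ?_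
  filter_upwards [ae_restrict_mem measurableSet_Ioc] with s hs
  exact hM s (Ioc_subset_Icc_self hs)

theorem setIntegral_Ioc_weight_mul_le_Lp_mul_Lq {p q : ℝ} (hpq : p.HolderConjugate q) {a b : ℝ}
    {w f g : ℝ → ℝ} (hw : Continuous w) (hf : Continuous f) (hg : Continuous g)
    (hw0 : ∀ s ∈ Ioc a b, 0 ≤ w s) (hf0 : ∀ s ∈ Ioc a b, 0 ≤ f s)
    (hg0 : ∀ s ∈ Ioc a b, 0 ≤ g s) :
    ∫ s in Ioc a b, w s * (f s * g s) ≤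
      (∫ s in Ioc a b, w s * f s ^ p) ^ (1 / p) * (∫ s in Ioc a b, w s * g s ^ q) ^ (1 / q) := by
  have hcont : ∀ {t : ℝ}, 0 < t → Continuous fun s => w s ^ t := fun ht =>
    hw.rpow_const fun _ => Or.inr ht.le
  have key := integral_mul_le_Lp_mul_Lq_of_nonneg hpq (μ := volume.restrict (Ioc a b))
    (f := fun s => w s ^ (1 / p) * f s) (g := fun s => w s ^ (1 / q) * g s)
    ((ae_restrict_mem measurableSet_Ioc).mono fun s hs =>
      mul_nonneg (Real.rpow_nonneg (hw0 s hs) _) (hf0 s hs))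
    ((ae_restrict_mem measurableSet_Ioc).mono fun s hs =>
      mul_nonneg (Real.rpow_nonneg (hw0 s hs) _) (hg0 s hs))
    (((hcont hpq.one_div_pos).mul hf).memLp_restrict_Ioc a b _)
    (((hcont hpq.symm.one_div_pos).mul hg).memLp_restrict_Ioc a b _)
  have hsplit : ∀ {t : ℝ} {h : ℝ → ℝ}, t ≠ 0 → (∀ s ∈ Ioc a b, 0 ≤ h s) →
      ∫ s in Ioc a b, (w s ^ (1 / t) * h s) ^ t = ∫ s in Ioc a b, w s * h s ^ t :=
    fun ht hh0 => setIntegral_congr_fun measurableSet_Ioc fun s hs => by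
      rw [Real.mul_rpow (Real.rpow_nonneg (hw0 s hs) _) (hh0 s hs), ← Real.rpow_mul (hw0 s hs),
        one_div_mul_cancel ht, Real.rpow_one]
  rw [hsplit hpq.ne_zero hf0, hsplit hpq.symm.ne_zero hg0] at key
  refine le_of_eq_of_le (setIntegral_congr_fun measurableSet_Ioc fun s hs => ?_) key
  have hsum : 1 / p + 1 / q = 1 := by simpa only [one_div] using hpq.inv_add_inv_eq_one
  rw [mul_mul_mul_comm, ← Real.rpow_add' (hw0 s hs) (by rw [hsum]; exact one_ne_zero), hsum,
    Real.rpow_one]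

theorem sub_rpow_mul_pow_le_setIntegral {F : ℝ → ℝ} (hF : ContDiff ℝ 1 F) {ν : ℝ} (hν : 1 ≤ ν)
    (n : ℕ) {r R : ℝ} (hr : 0 ≤ r) (hrR : r ≤ R) (hF0 : ∀ s ∈ Ioc r R, 0 ≤ F s) :
    (F r ^ ν - F R ^ ν) * r ^ n ≤ ν * ∫ s in Ioc r R, s ^ n * (F s ^ (ν - 1) * |deriv F s|) := by
  have hF' : Continuous (deriv F) := hF.continuous_deriv le_rfl
  have hFν : Continuous fun s => F s ^ (ν - 1) :=
    hF.continuous.rpow_const fun _ => Or.inr (sub_nonneg.2 hν)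
  have hderiv : ∀ s, HasDerivAt (fun t => F t ^ ν) (ν * F s ^ (ν - 1) * deriv F s) s := fun s =>
    (Real.hasDerivAt_rpow_const (Or.inr hν)).comp s
      ((hF.differentiable one_ne_zero).differentiableAt.hasDerivAt)
  have hFTC : ∫ s in Ioc r R, ν * F s ^ (ν - 1) * deriv F s = F R ^ ν - F r ^ ν := by
    rw [← intervalIntegral.integral_of_le hrR]
    exact intervalIntegral.integral_eq_sub_of_hasDerivAt (fun s _ => hderiv s)
      (((continuous_const.mul hFν).mul hF' :
        Continuous fun s => ν * F s ^ (ν - 1) * deriv F s).intervalIntegrable r R)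
  calc (F r ^ ν - F R ^ ν) * r ^ n
      = (∫ s in Ioc r R, -(ν * F s ^ (ν - 1) * deriv F s)) * r ^ n := by
        rw [integral_neg, hFTC, neg_sub]
    _ = ∫ s in Ioc r R, (ν * F s ^ (ν - 1)) * (-deriv F s * r ^ n) := by
        rw [← integral_mul_const]
        congr 1 with s
        ring
    _ ≤ ∫ s in Ioc r R, (ν * F s ^ (ν - 1)) * (|deriv F s| * s ^ n) := by
        refine setIntegral_mono_on ?_ ?_ measurableSet_Ioc fun s hs => ?_
        · exact ((continuous_const.mul hFν).mul (hF'.neg.mul continuous_const)).integrableOn_Ioc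
        · exact ((continuous_const.mul hFν).mul (hF'.abs.mul (continuous_pow n))).integrableOn_Ioc
        · have hs0 : 0 ≤ s := hr.trans hs.1.le
          gcongr
          · exact mul_nonneg (by linarith) (Real.rpow_nonneg (hF0 s hs) _)
          · exact neg_le_abs _
          · exact hs.1.le
    _ = ν * ∫ s in Ioc r R, s ^ n * (F s ^ (ν - 1) * |deriv F s|) := by
        rw [← integral_const_mul]
        congr 1 with s
        ring

theorem tendsto_atTop_zero_of_antitoneOn_of_integrableOn {f : ℝ → ℝ} {a : ℝ} (ha : 0 ≤ a) (m : ℕ)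
    (hf0 : ∀ s, 0 ≤ s → 0 ≤ f s) (hf : AntitoneOn f (Ici 0))
    (hint : IntegrableOn (fun s => s ^ m * |f s| ^ a) (Ioi 0)) :
    Tendsto f atTop (𝓝 0) := by
  refine tendsto_order.2 ⟨fun b hb => (eventually_ge_atTop 0).mono fun s hs =>
    hb.trans_le (hf0 s hs), fun ε hε => ?_⟩
  by_contra hnot
  have hε_le : ∀ s, 0 ≤ s → ε ≤ f s := fun s hs => by
    obtain ⟨R, hsR, hR⟩ := (frequently_atTop.1 (Filter.not_eventually.1 hnot)) s
    exact (not_lt.1 hR).trans (hf hs (mem_Ici.2 (hs.trans hsR)) hsR)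
  have hconst : IntegrableOn (fun _ : ℝ => ε ^ a) (Ioi 1) := by
    refine (hint.mono_set (Ioi_subset_Ioi zero_le_one)).mono' aestronglyMeasurable_const ?_
    filter_upwards [ae_restrict_mem measurableSet_Ioi] with s hs
    have hs1 : (1 : ℝ) ≤ s := le_of_lt hs
    rw [Real.norm_of_nonneg (Real.rpow_nonneg hε.le _)]
    calc ε ^ a ≤ |f s| ^ a :=
          Real.rpow_le_rpow hε.le ((hε_le s (by linarith)).trans (le_abs_self _)) ha
      _ ≤ s ^ m * |f s| ^ a := le_mul_of_one_le_left (by positivity) (one_le_pow₀ hs1)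
  rw [integrableOn_const_iff, Real.volume_Ioi] at hconst
  simp only [enorm_eq_zero, lt_self_iff_false, or_false] at hconst
  exact (Real.rpow_pos_of_pos hε a).ne' hconst

theorem rpow_setIntegral_mono_set {α : Type*} [MeasurableSpace α] {μ : Measure α} {g : α → ℝ}
    {s t : Set α} (hs : MeasurableSet s) (ht : MeasurableSet t) (hst : s ⊆ t)
    (hg : IntegrableOn g t μ) (hg0 : ∀ x ∈ t, 0 ≤ g x) {e : ℝ} (he : 0 ≤ e) :
    (∫ x in s, g x ∂μ) ^ e ≤ (∫ x in t, g x ∂μ) ^ e :=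
  Real.rpow_le_rpow (setIntegral_nonneg hs fun x hx => hg0 x (hst hx))
    (setIntegral_mono_set hg ((ae_restrict_mem ht).mono hg0) hst.eventuallyLE) he

theorem sub_rpow_mul_pow_le_Lp_mul_Lq {F : ℝ → ℝ} (hF : ContDiff ℝ 1 F) {r R : ℝ} (hr : 0 ≤ r)
    (hrR : r ≤ R) (hF0 : ∀ s ∈ Ioc r R, 0 ≤ F s) {p p' a ν : ℝ} (hpp' : p'.HolderConjugate p)
    (ha : 0 ≤ a) (hν : (ν - 1) * p' = a) (n : ℕ) :
    (F r ^ ν - F R ^ ν) * r ^ n ≤ ν * ((∫ s in Ioc r R, s ^ n * |F s| ^ a) ^ (1 / p') *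
      (∫ s in Ioc r R, s ^ n * |deriv F s| ^ p) ^ (1 / p)) := by
  have hν1 : 1 ≤ ν := by nlinarith [hpp'.pos]
  have hFa : ∫ s in Ioc r R, s ^ n * (F s ^ (ν - 1)) ^ p' = ∫ s in Ioc r R, s ^ n * |F s| ^ a :=
    setIntegral_congr_fun measurableSet_Ioc fun s hs => by
      rw [← Real.rpow_mul (hF0 s hs), hν, abs_of_nonneg (hF0 s hs)]
  rw [← hFa]
  calc (F r ^ ν - F R ^ ν) * r ^ n
      ≤ ν * ∫ s in Ioc r R, s ^ n * (F s ^ (ν - 1) * |deriv F s|) :=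
        sub_rpow_mul_pow_le_setIntegral hF hν1 n hr hrR hF0
    _ ≤ _ := by
        gcongr
        exact setIntegral_Ioc_weight_mul_le_Lp_mul_Lq hpp' (continuous_pow n)
          (hF.continuous.rpow_const fun _ => Or.inr (sub_nonneg.2 hν1))
          (hF.continuous_deriv le_rfl).abs (fun s hs => pow_nonneg (hr.trans hs.1.le) n)
          (fun s hs => Real.rpow_nonneg (hF0 s hs) _) fun s _ => abs_nonneg _

theorem rpow_mul_pow_le_of_integrableOn {F : ℝ → ℝ} (hF : ContDiff ℝ 1 F) {r : ℝ} (hr : 0 < r)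
    (hF0 : ∀ s ∈ Ioi r, 0 ≤ F s) (hlim : Tendsto F atTop (𝓝 0)) {p p' a ν : ℝ}
    (hpp' : p'.HolderConjugate p) (ha : 0 ≤ a) (hν : (ν - 1) * p' = a) (n : ℕ)
    (hIF : IntegrableOn (fun s => s ^ n * |F s| ^ a) (Ioi 0))
    (hIF' : IntegrableOn (fun s => s ^ n * |deriv F s| ^ p) (Ioi 0)) :
    F r ^ ν * r ^ n ≤ ν * ((∫ s in Ioi 0, s ^ n * |F s| ^ a) ^ (1 / p') *
      (∫ s in Ioi 0, s ^ n * |deriv F s| ^ p) ^ (1 / p)) := by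
  have hν0 : 0 < ν := by nlinarith [hpp'.pos]
  have hweight : ∀ (g : ℝ → ℝ) (t : ℝ), ∀ s ∈ Ioi (0 : ℝ), 0 ≤ s ^ n * |g s| ^ t :=
    fun _ _ s hs => mul_nonneg (pow_nonneg (le_of_lt hs) n) (Real.rpow_nonneg (abs_nonneg _) _)
  have hbound : ∀ R, r ≤ R → (F r ^ ν - F R ^ ν) * r ^ n ≤
      ν * ((∫ s in Ioi 0, s ^ n * |F s| ^ a) ^ (1 / p') *
        (∫ s in Ioi 0, s ^ n * |deriv F s| ^ p) ^ (1 / p)) := fun R hrR => by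
    have hIoc : Ioc r R ⊆ Ioi 0 := fun s hs => hr.trans hs.1
    have hIF'_nonneg : 0 ≤ ∫ s in Ioc r R, s ^ n * |deriv F s| ^ p :=
      setIntegral_nonneg measurableSet_Ioc fun s hs => hweight _ p s (hIoc hs)
    have hIF_nonneg : 0 ≤ ∫ s in Ioi 0, s ^ n * |F s| ^ a :=
      setIntegral_nonneg measurableSet_Ioi (hweight F a)
    refine (sub_rpow_mul_pow_le_Lp_mul_Lq hF hr.le hrR (fun s hs => hF0 s hs.1) hpp' ha hν n).trans
      ?_
    gcongr ν * (?_ * ?_)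
    · exact rpow_setIntegral_mono_set measurableSet_Ioc measurableSet_Ioi hIoc hIF
        (hweight F a) hpp'.one_div_nonneg
    · exact rpow_setIntegral_mono_set measurableSet_Ioc measurableSet_Ioi hIoc hIF'
        (hweight _ p) hpp'.symm.one_div_nonneg
  have hFRν : Tendsto (fun R => (F r ^ ν - F R ^ ν) * r ^ n) atTop (𝓝 (F r ^ ν * r ^ n)) := by
    have := ((hlim.rpow_const (Or.inr hν0.le)).const_sub (F r ^ ν)).mul_const (r ^ n)
    rwa [Real.zero_rpow hν0.ne', sub_zero] at this
  exact le_of_tendsto hFRν ((eventually_ge_atTop r).mono hbound)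

section Radial

variable {E : Type*} [NormedAddCommGroup E] [NormedSpace ℝ E]

theorem exists_contDiff_profile_of_radial [Nontrivial E] {u : E → ℝ} (hu : ContDiff ℝ 1 u)
    {f : ℝ → ℝ} (hf0 : ∀ r, 0 ≤ r → 0 ≤ f r) (hf : AntitoneOn f (Ici 0))
    (hfu : ∀ x, u x = f ‖x‖) :
    ∃ F : ℝ → ℝ, ContDiff ℝ 1 F ∧ (∀ s, 0 ≤ F s) ∧ AntitoneOn F (Ici 0) ∧ ∀ x, u x = F ‖x‖ := by
  obtain ⟨v, hv⟩ := exists_norm_eq E zero_le_one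
  have hFf : ∀ s, u (s • v) = f |s| := fun s => by
    rw [hfu, norm_smul, hv, mul_one, Real.norm_eq_abs]
  refine ⟨fun s => u (s • v), hu.comp (contDiff_id.smul contDiff_const), fun s => ?_,
    fun s hs t ht hst => ?_, fun x => ?_⟩ <;> simp only [hFf]
  · exact hf0 _ (abs_nonneg s)
  · rw [abs_of_nonneg (mem_Ici.1 hs), abs_of_nonneg (mem_Ici.1 ht)]
    exact hf hs ht hst
  · rw [abs_norm, hfu]

theorem abs_deriv_le_norm_fderiv_of_radial {u : E → ℝ} {F : ℝ → ℝ} (hu : ∀ x, u x = F ‖x‖)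
    {y : E} (huy : DifferentiableAt ℝ u y) (hy : y ≠ 0) : |deriv F ‖y‖| ≤ ‖fderiv ℝ u y‖ := by
  set w : E := ‖y‖⁻¹ • y
  have hw : ‖w‖ = 1 := norm_smul_inv_norm hy
  have hyw : ‖y‖ • w = y := smul_inv_smul₀ (norm_ne_zero_iff.2 hy) y
  have hFray : F =ᶠ[𝓝 ‖y‖] fun s => u (s • w) := by
    filter_upwards [lt_mem_nhds (norm_pos_iff.2 hy)] with s hs
    rw [hu, norm_smul, hw, mul_one, Real.norm_of_nonneg hs.le]
  have hray : HasDerivAt (fun s : ℝ => u (s • w)) (fderiv ℝ u y w) ‖y‖ := by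
    have hu' : HasFDerivAt u (fderiv ℝ u y) (‖y‖ • w) := hyw.symm ▸ huy.hasFDerivAt
    simpa [Function.comp_def] using hu'.comp_hasDerivAt ‖y‖ ((hasDerivAt_id ‖y‖).smul_const w)
  rw [(hray.congr_of_eventuallyEq hFray).deriv]
  simpa [hw] using (fderiv ℝ u y).le_opNorm w

variable [FiniteDimensional ℝ E] [MeasurableSpace E] [BorelSpace E] (μ : Measure E)
  [μ.IsAddHaarMeasure] [Nontrivial E]

theorem integral_comp_norm_eq_mul (g : ℝ → ℝ) :
    ∫ y, g ‖y‖ ∂μ = Module.finrank ℝ E * μ.real (ball 0 1) *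
      ∫ s in Ioi 0, s ^ (Module.finrank ℝ E - 1) * g s := by
  simp only [integral_fun_norm_addHaar μ g, nsmul_eq_mul, smul_eq_mul, mul_assoc]

theorem ae_abs_deriv_rpow_le_of_radial {u : E → ℝ} (hu : Differentiable ℝ u) {F : ℝ → ℝ}
    (hFu : ∀ x, u x = F ‖x‖) {p : ℝ} (hp : 0 ≤ p) :
    ∀ᵐ y ∂μ, |deriv F ‖y‖| ^ p ≤ ‖fderiv ℝ u y‖ ^ p :=
  (Measure.ae_ne μ 0).mono fun y hy => Real.rpow_le_rpow (abs_nonneg _)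
    (abs_deriv_le_norm_fderiv_of_radial hFu (hu y) hy) hp

theorem integrable_abs_deriv_rpow_of_radial {u : E → ℝ} (hu : Differentiable ℝ u) {F : ℝ → ℝ}
    (hF : ContDiff ℝ 1 F) (hFu : ∀ x, u x = F ‖x‖) {p : ℝ} (hp : 0 ≤ p)
    (hB : Integrable (fun x => ‖fderiv ℝ u x‖ ^ p) μ) :
    Integrable (fun y => |deriv F ‖y‖| ^ p) μ :=
  hB.mono' ((((hF.continuous_deriv le_rfl).comp continuous_norm).abs.rpow_const
      fun _ => Or.inr hp).aestronglyMeasurable)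
    ((ae_abs_deriv_rpow_le_of_radial μ hu hFu hp).mono fun y hy => by
      rwa [Real.norm_of_nonneg (Real.rpow_nonneg (abs_nonneg _) _)])

theorem rpow_mul_norm_pow_le_of_radial {p p' a ν : ℝ} (hpp' : p'.HolderConjugate p) (ha : 0 ≤ a)
    (hν : (ν - 1) * p' = a) {u : E → ℝ} (hu : Differentiable ℝ u) {F : ℝ → ℝ}
    (hF : ContDiff ℝ 1 F) (hF0 : ∀ s, 0 ≤ F s) (hFanti : AntitoneOn F (Ici 0))
    (hFu : ∀ x, u x = F ‖x‖) (hA : Integrable (fun x => |u x| ^ a) μ)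
    (hB : Integrable (fun x => ‖fderiv ℝ u x‖ ^ p) μ) {x : E} (hx : x ≠ 0) :
    u x ^ ν * ‖x‖ ^ (Module.finrank ℝ E - 1) ≤ ν / (Module.finrank ℝ E * μ.real (ball 0 1)) *
      ((∫ y, |u y| ^ a ∂μ) ^ (1 / p') * (∫ y, ‖fderiv ℝ u y‖ ^ p ∂μ) ^ (1 / p)) := by
  set n := Module.finrank ℝ E
  set c : ℝ := n * μ.real (ball 0 1)
  have hc : 0 < c := mul_pos (Nat.cast_pos.2 Module.finrank_pos)
    (ENNReal.toReal_pos (measure_ball_pos μ 0 one_pos).ne' measure_ball_lt_top.ne)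
  have hp : 0 ≤ p := hpp'.symm.nonneg
  have hA' : Integrable (fun y => |F ‖y‖| ^ a) μ := by simpa only [hFu] using hA
  have hIF_eq : ∫ s in Ioi 0, s ^ (n - 1) * |F s| ^ a = (∫ y, |u y| ^ a ∂μ) / c := by
    simp only [hFu, integral_comp_norm_eq_mul μ (fun s => |F s| ^ a)]
    rw [mul_div_cancel_left₀ _ hc.ne']
  have hB' := integrable_abs_deriv_rpow_of_radial μ hu hF hFu hp hB
  have hIF'_le : ∫ s in Ioi 0, s ^ (n - 1) * |deriv F s| ^ p ≤
      (∫ y, ‖fderiv ℝ u y‖ ^ p ∂μ) / c := by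
    rw [le_div_iff₀' hc, ← integral_comp_norm_eq_mul μ (fun s => |deriv F s| ^ p)]
    exact integral_mono_ae hB' hB (ae_abs_deriv_rpow_le_of_radial μ hu hFu hp)
  have hIF := (integrable_fun_norm_addHaar μ (f := fun s => |F s| ^ a)).1 hA'
  have hradial := rpow_mul_pow_le_of_integrableOn hF (norm_pos_iff.2 hx) (fun s _ => hF0 s)
    (tendsto_atTop_zero_of_antitoneOn_of_integrableOn ha (n - 1) (fun s _ => hF0 s) hFanti hIF)
    hpp' ha hν (n - 1) hIF ((integrable_fun_norm_addHaar μ (f := fun s => |deriv F s| ^ p)).1 hB')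
  rw [hIF_eq] at hradial
  have hν0 : 0 ≤ ν := by nlinarith [hpp'.pos]
  have hc_rpow : c ^ (1 / p') * c ^ (1 / p) = c := by
    rw [← Real.rpow_add hc, hpp'.one_div_add_one_div, div_one, Real.rpow_one]
  rw [hFu x]
  calc F ‖x‖ ^ ν * ‖x‖ ^ (n - 1)
      ≤ ν * (((∫ y, |u y| ^ a ∂μ) / c) ^ (1 / p') *
          (∫ s in Ioi 0, s ^ (n - 1) * |deriv F s| ^ p) ^ (1 / p)) := hradial
    _ ≤ ν * (((∫ y, |u y| ^ a ∂μ) / c) ^ (1 / p') *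
          ((∫ y, ‖fderiv ℝ u y‖ ^ p ∂μ) / c) ^ (1 / p)) := by
        gcongr
        exact setIntegral_nonneg measurableSet_Ioi fun s hs =>
          mul_nonneg (pow_nonneg (le_of_lt hs) _) (Real.rpow_nonneg (abs_nonneg _) _)
    _ = _ := by
        rw [Real.div_rpow (by positivity) hc.le, Real.div_rpow (by positivity) hc.le,
          div_mul_div_comm, hc_rpow]
        ring

end Radial

theorem le_mul_rpow_of_rpow_mul_pow_le {X r K A B α β ν : ℝ} (m : ℕ) (hX : 0 ≤ X) (hr : 0 < r)
    (hK : 0 ≤ K) (hA : 0 ≤ A) (hB : 0 ≤ B) (hν : 0 < ν)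
    (h : X ^ ν * r ^ m ≤ K * (A ^ α * B ^ β)) :
    X ≤ K ^ ν⁻¹ * r ^ (-(m : ℝ) / ν) * A ^ (α / ν) * B ^ (β / ν) := by
  have hpow : (K ^ ν⁻¹ * r ^ (-(m : ℝ) / ν) * A ^ (α / ν) * B ^ (β / ν)) ^ ν =
      K * (A ^ α * B ^ β) / r ^ m := by
    rw [Real.mul_rpow (by positivity) (by positivity),
      Real.mul_rpow (by positivity) (by positivity),
      Real.mul_rpow (by positivity) (by positivity), Real.rpow_inv_rpow hK hν.ne',
      ← Real.rpow_mul hr.le, ← Real.rpow_mul hA, ← Real.rpow_mul hB, div_mul_cancel₀ _ hν.ne',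
      div_mul_cancel₀ _ hν.ne', div_mul_cancel₀ _ hν.ne', Real.rpow_neg hr.le, Real.rpow_natCast]
    field_simp
  rw [← Real.rpow_le_rpow_iff hX (by positivity) hν, hpow, le_div_iff₀ (by positivity)]
  exact h

/-- Modified Strauss radial inequality: a pointwise polynomial decay
bound for nonnegative, radially nonincreasing `C¹` functions on ℝ^d (`d ≥ 2`) in
terms of their `L^{q+1}` norm and the `L^p` norm of their gradient. -/
theorem stmt19 (d : ℕ) (hd : 2 ≤ d) (p q ν : ℝ) (hp : 1 < p) (hq : 0 ≤ q)
    (hν : ν = (q + 1) * (p - 1) / p + 1) :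
    ∃ C : ℝ, 0 < C ∧
      ∀ u : EuclideanSpace ℝ (Fin d) → ℝ, ContDiff ℝ 1 u →
        (∃ f : ℝ → ℝ, (∀ r, 0 ≤ r → 0 ≤ f r) ∧ AntitoneOn f (Set.Ici 0) ∧
          ∀ x, u x = f ‖x‖) →
        Integrable (fun x => |u x| ^ (q + 1)) →
        Integrable (fun x => ‖fderiv ℝ u x‖ ^ p) →
        ∀ x : EuclideanSpace ℝ (Fin d), x ≠ 0 →
          u x ≤ C * ‖x‖ ^ ((1 - (d : ℝ)) / ν) *
            (∫ y, |u y| ^ (q + 1)) ^ ((ν - 1) / (ν * (q + 1))) *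
            (∫ y, ‖fderiv ℝ u y‖ ^ p) ^ (1 / (ν * p)) := by
  have hpp' : p.conjExponent.HolderConjugate p := (Real.HolderConjugate.conjExponent hp).symm
  have hνp' : (ν - 1) * p.conjExponent = q + 1 := by
    have : p - 1 ≠ 0 := by linarith
    rw [hν, Real.conjExponent]
    field_simp
    ring
  have hν1 : 1 < ν := by nlinarith [hpp'.pos]
  set c : ℝ := d * volume.real (ball (0 : EuclideanSpace ℝ (Fin d)) 1)
  have hc : 0 < c := mul_pos (by exact_mod_cast (by omega : 0 < d))
    (ENNReal.toReal_pos (measure_ball_pos _ _ one_pos).ne' measure_ball_lt_top.ne)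
  refine ⟨(ν / c) ^ ν⁻¹, by positivity, fun u hu ⟨f, hf0, hf, hfu⟩ hA hB x hx => ?_⟩
  have : Nontrivial (EuclideanSpace ℝ (Fin d)) := nontrivial_of_ne x 0 hx
  obtain ⟨F, hF, hF0, hFanti, hFu⟩ := exists_contDiff_profile_of_radial hu hf0 hf hfu
  have hbound := rpow_mul_norm_pow_le_of_radial volume hpp' (by linarith) hνp'
    (hu.differentiable one_ne_zero) hF hF0 hFanti hFu hA hB hx
  rw [finrank_euclideanSpace_fin] at hbound
  have hexp_x : (1 - (d : ℝ)) / ν = -((d - 1 : ℕ) : ℝ) / ν := by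
    rw [Nat.cast_sub (by omega)]
    ring
  have hexp_A : (ν - 1) / (ν * (q + 1)) = 1 / p.conjExponent / ν := by
    rw [← hνp', mul_comm ν, ← div_div, div_mul_cancel_left₀ (sub_pos.2 hν1).ne', one_div]
  have hexp_B : 1 / (ν * p) = 1 / p / ν := by rw [div_div, mul_comm]
  rw [hexp_x, hexp_A, hexp_B]
  exact le_mul_rpow_of_rpow_mul_pow_le (d - 1) ((hfu x).symm ▸ hf0 _ (norm_nonneg x))
    (norm_pos_iff.2 hx) (by positivity) (by positivity) (by positivity) (zero_lt_one.trans hν1)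
    hbound
end
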